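/- arXiv:2401.06095 — 3 statements merged into one kernel-verified Lean document; each statement's English description precedes it below -/
import Mathlib

section
/- For every positive integer n, the number of noncrossing partitions of a linearly ordered set with 2n elements in which every block contains at least two elements (i.e., noncrossing partitions without singletons) equals the 2n-th Riordan number R_{2n}. (This is the combinatorial content of the paper's Theorem 1: the chromatic basis B_n is in bijection with these partitions, so the dimension of the n-th chromatic algebra is R_{2n}.) -/
set_option maxHeartbeats 1000000

/-- Two elements lie in the same block of the finpartition `P`. -/
def SameBlock {m : ℕ} (P : Finpartition (Finset.univ : Finset (Fin m)))
    (a b : Fin m) : Prop :=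
  ∃ B ∈ P.parts, a ∈ B ∧ b ∈ B

/-- A partition of `Fin m` is noncrossing if there are no indices
`a < b < c < d` with `a, c` in one block, `b, d` in one block, and
`a, b` in different blocks. -/
def IsNoncrossing {m : ℕ} (P : Finpartition (Finset.univ : Finset (Fin m))) : Prop :=
  ¬ ∃ a b c d : Fin m, a < b ∧ b < c ∧ c < d ∧
    SameBlock P a c ∧ SameBlock P b d ∧ ¬ SameBlock P a b

/-- A partition has no singletons if every block has at least two elements. -/
def NoSingletons {m : ℕ} (P : Finpartition (Finset.univ : Finset (Fin m))) : Prop :=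
  ∀ B ∈ P.parts, 2 ≤ B.card

open Finset

namespace Chrom

/-- Motzkin numbers, by the quadratic recurrence. -/
def mo : ℕ → ℕ
  | 0 => 1
  | n + 1 =>
    mo n + ∑ i : Fin n, have := i.2; mo i * mo (n - 1 - i)

/-- Riordan numbers, by the first-return recurrence. -/
def p : ℕ → ℕ
  | 0 => 1
  | n + 1 =>
    ∑ i : Fin n, have := i.2; mo i * p (n - 1 - i)

theorem mo_succ (n : ℕ) :
    mo (n + 1) = mo n + ∑ i ∈ range n, mo i * mo (n - 1 - i) := by
  rw [mo]
  congr 1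
  exact Fin.sum_univ_eq_sum_range (fun i => mo i * mo (n - 1 - i)) n

theorem p_succ (n : ℕ) :
    p (n + 1) = ∑ i ∈ range n, mo i * p (n - 1 - i) := by
  rw [p]
  exact Fin.sum_univ_eq_sum_range (fun i => mo i * p (n - 1 - i)) n

@[simp] theorem mo_zero : mo 0 = 1 := by rw [mo]
@[simp] theorem p_zero : p 0 = 1 := by rw [p]
@[simp] theorem mo_one : mo 1 = 1 := by simp [mo_succ]
@[simp] theorem p_one : p 1 = 0 := by simp [p_succ]

theorem mo_succ_succ (k : ℕ) :
    mo (k + 2) = mo (k + 1) + ∑ i ∈ range (k + 1), mo i * mo (k - i) := by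
  rw [mo_succ]
  simp only [Nat.add_sub_cancel]

theorem p_succ_succ (k : ℕ) :
    p (k + 2) = ∑ i ∈ range (k + 1), mo i * p (k - i) := by
  rw [p_succ]
  simp only [Nat.add_sub_cancel]

/-- glue lemma: `p (n+1) + p n = mo n`. -/
theorem p_add_p : ∀ n : ℕ, p (n + 1) + p n = mo n := by
  intro n
  induction n using Nat.strong_induction_on with
  | _ n ih =>
    match n with
    | 0 => simp
    | 1 => simp [p_succ_succ]
    | (m + 2) =>
      rw [p_succ_succ (m + 1), p_succ_succ m, mo_succ_succ m, Finset.sum_range_succ]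
      have h1 : ∀ i ∈ range (m + 1),
          mo i * mo (m - i) = mo i * p (m - i + 1) + mo i * p (m - i) := by
        intro i _
        rw [← ih (m - i) (by omega), Nat.mul_add]
      rw [Finset.sum_congr rfl h1, Finset.sum_add_distrib]
      have h2 : ∀ i ∈ range (m + 1),
          mo i * p (m + 1 - i) = mo i * p (m - i + 1) := by
        intro i hi
        simp only [mem_range] at hi
        congr 2
        omega
      rw [Finset.sum_congr rfl h2]
      have : m + 1 - (m + 1) = 0 := by omega
      rw [this, p_zero, Nat.mul_one]
      omega

section Series

open PowerSeries

noncomputable def F : PowerSeries ℚ := PowerSeries.mk fun n => (mo n : ℚ)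

noncomputable def G : PowerSeries ℚ := d⁄dX ℚ F

@[simp] theorem coeff_F (n : ℕ) : coeff n F = (mo n : ℚ) := coeff_mk _ _

theorem coeff_G (n : ℕ) : coeff n G = (mo (n + 1) : ℚ) * (n + 1) := by
  rw [G, coeff_derivative, coeff_F]

theorem algE : F = 1 + X * F + X ^ 2 * F ^ 2 := by
  ext n
  match n with
  | 0 =>
    simp [coeff_one, pow_two, coeff_zero_eq_constantCoeff, map_mul]
  | 1 =>
    rw [map_add, map_add, coeff_one, coeff_succ_X_mul, coeff_F, coeff_F]
    have : coeff 1 (X ^ 2 * F ^ 2) = 0 := by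
      rw [coeff_X_pow_mul']
      simp
    rw [this]
    simp
  | (k + 2) =>
    rw [map_add, map_add, coeff_one, coeff_succ_X_mul, coeff_F, coeff_F]
    have h2 : coeff (k + 2) (X ^ 2 * F ^ 2) = coeff k (F ^ 2) := by
      have := coeff_X_pow_mul (F ^ 2) 2 k
      rwa [show k + 2 = k + 2 from rfl] at this
    rw [h2, pow_two, coeff_mul]
    rw [Finset.Nat.sum_antidiagonal_eq_sum_range_succ (fun a b => coeff a F * coeff b F) k]
    simp only [coeff_F]
    rw [if_neg (by omega)]
    rw [mo_succ_succ k]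
    push_cast
    ring

theorem algDE : G = F + X * G + (2 * X * F ^ 2 + X ^ 2 * (2 * F * G)) := by
  have h := congrArg (d⁄dX ℚ) algE
  rw [map_add, map_add, Derivation.map_one_eq_zero] at h
  rw [Derivation.leibniz, Derivation.leibniz, Derivation.leibniz_pow, Derivation.leibniz_pow,
    derivative_X] at h
  simp only [smul_eq_mul, nsmul_eq_mul, mul_one, pow_one, Nat.cast_ofNat] at h
  rw [G]
  linear_combination h

theorem key :
    X ^ 1 * G + F + F =
      X ^ 2 * G + X ^ 2 * G + X ^ 3 * G + X ^ 3 * G + X ^ 3 * G +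
        X ^ 2 * F + X ^ 2 * F + X ^ 2 * F + X ^ 1 * F + X ^ 1 * F + X ^ 1 * F + 1 + 1 := by
  linear_combination (-(X * (2 * X ^ 2 * F + X - 1))) * algDE +
    (4 * X ^ 3 * G + 4 * X ^ 2 * F + 2) * algE

theorem mo_holo_Q (k : ℕ) :
    ((k : ℚ) + 5) * mo (k + 3) = (2 * k + 7) * mo (k + 2) + (3 * k + 6) * mo (k + 1) := by
  have hc := congrArg (coeff (k + 3)) key
  have c1 : ∀ h : PowerSeries ℚ, coeff (k + 3) (X ^ 1 * h) = coeff (k + 2) h := by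
    intro h
    have := coeff_X_pow_mul h 1 (k + 2)
    rwa [show k + 2 + 1 = k + 3 by omega] at this
  have c2 : ∀ h : PowerSeries ℚ, coeff (k + 3) (X ^ 2 * h) = coeff (k + 1) h := by
    intro h
    have := coeff_X_pow_mul h 2 (k + 1)
    rwa [show k + 1 + 2 = k + 3 by omega] at this
  have c3 : ∀ h : PowerSeries ℚ, coeff (k + 3) (X ^ 3 * h) = coeff k h := by
    intro h
    have := coeff_X_pow_mul h 3 k
    rwa [show k + 3 = k + 3 from rfl] at this
  simp only [map_add, c1, c2, c3, coeff_one, if_neg (show ¬ k + 3 = 0 by omega),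
    coeff_F, coeff_G] at hc
  push_cast at hc ⊢
  linarith [hc]

theorem mo_holo (k : ℕ) :
    (k + 5) * mo (k + 3) = (2 * k + 7) * mo (k + 2) + (3 * k + 6) * mo (k + 1) := by
  have := mo_holo_Q k
  have : ((k + 5) * mo (k + 3) : ℚ) = ((2 * k + 7) * mo (k + 2) + (3 * k + 6) * mo (k + 1) : ℕ) := by
    push_cast
    linarith [mo_holo_Q k]
  exact_mod_cast this

end Series

section Riordan

variable (R : ℕ → ℕ) (hR0 : R 0 = 1) (hR1 : R 1 = 0)
  (hrec : ∀ k : ℕ, 2 ≤ k → (k + 1) * R k = (k - 1) * (2 * R (k - 1) + 3 * R (k - 2)))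

include hR0 hR1 hrec

theorem R_two : R 2 = 1 := by
  have := hrec 2 (by norm_num)
  simp [hR0, hR1] at this
  omega

theorem R_add_R : ∀ n : ℕ, R n + R (n + 1) = mo n := by
  intro n
  induction n using Nat.strong_induction_on with
  | _ n ih =>
    match n with
    | 0 => simp [hR0, hR1]
    | 1 => simp [hR1, R_two R hR0 hR1 hrec]
    | 2 =>
      have h3 := hrec 3 (by norm_num)
      simp only [show (3:ℕ) - 1 = 2 from rfl, show (3:ℕ) - 2 = 1 from rfl] at h3
      rw [R_two R hR0 hR1 hrec, hR1] at h3
      have hR3 : R 3 = 1 := by omega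
      rw [R_two R hR0 hR1 hrec, hR3]
      rw [show mo 2 = 2 by simp [mo_succ_succ]]
    | (k + 3) =>
      -- use holonomic recurrence on both sides
      have hmoh := mo_holo k
      have e1 : R (k + 1) + R (k + 2) = mo (k + 1) := ih (k + 1) (by omega)
      have e2 : R (k + 2) + R (k + 3) = mo (k + 2) := ih (k + 2) (by omega)
      have h4 := hrec (k + 4) (by omega)
      have h3 := hrec (k + 3) (by omega)
      simp only [show k + 4 - 1 = k + 3 by omega, show k + 4 - 2 = k + 2 by omega,
        show k + 3 - 1 = k + 2 by omega, show k + 3 - 2 = k + 1 by omega] at h4 h3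
      -- (k+5) * (R (k+3) + R (k+4)) = (k+5) * mo (k+3)
      have main : (k + 5) * (R (k + 3) + R (k + 4)) = (k + 5) * mo (k + 3) := by
        rw [hmoh, ← e1, ← e2]
        nlinarith [h4, h3]
      exact Nat.eq_of_mul_eq_mul_left (by omega) main

theorem p_eq_R : ∀ n : ℕ, p n = R n := by
  intro n
  induction n with
  | zero => simp [hR0]
  | succ n ihn =>
    have h1 := p_add_p n
    have h2 := R_add_R R hR0 hR1 hrec n
    omega

end Riordan



variable {s : Finset ℕ}

/-- same block -/
def sb (P : Finpartition s) (x y : ℕ) : Prop := ∃ B ∈ P.parts, x ∈ B ∧ y ∈ B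

/-- noncrossing, positive form -/
def NC (P : Finpartition s) : Prop :=
  ∀ ⦃w x y z : ℕ⦄, w < x → x < y → y < z → sb P w y → sb P x z → sb P w x

def NS (P : Finpartition s) : Prop := ∀ B ∈ P.parts, 2 ≤ B.card

/-- all singleton blocks are exposed (not spanned by another block) -/
def EX (P : Finpartition s) : Prop :=
  ∀ B ∈ P.parts, B.card = 1 → ∀ x ∈ B, ∀ C ∈ P.parts, ∀ u ∈ C, ∀ v ∈ C,
    u < x → x < v → False

def cond (t : Bool) (P : Finpartition s) : Prop := NC P ∧ EX P ∧ (t = true → NS P)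

instance finpartitionFinite : Finite (Finpartition s) := by
  classical
  apply Finite.of_injective (fun P : Finpartition s => P.parts.subtype (· ∈ s.powerset))
  intro P Q h
  have key : ∀ R : Finpartition s,
      (R.parts.subtype (· ∈ s.powerset)).map (Function.Embedding.subtype _) = R.parts := by
    intro R
    rw [Finset.subtype_map]
    exact Finset.filter_true_of_mem fun B hB => Finset.mem_powerset.2 (R.le hB)
  have : P.parts = Q.parts := by
    rw [← key P, ← key Q]
    exact congrArg (Finset.map (Function.Embedding.subtype _)) h
  ext B
  rw [this]

noncomputable def cardT (t : Bool) (s : Finset ℕ) : ℕ :=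
  Nat.card {P : Finpartition s // cond t P}

theorem mem_of_mem_part {P : Finpartition s} {B : Finset ℕ} (hB : B ∈ P.parts) {x : ℕ}
    (hx : x ∈ B) : x ∈ s := P.le hB hx

theorem sb_iff {P : Finpartition s} {x y : ℕ} (hx : x ∈ s) :
    sb P x y ↔ y ∈ P.part x := by
  constructor
  · rintro ⟨B, hB, hxB, hyB⟩
    rwa [P.part_eq_of_mem hB hxB]
  · intro hy
    exact ⟨P.part x, P.part_mem.2 hx, P.mem_part hx, hy⟩

theorem cond_empty (t : Bool) (P : Finpartition (∅ : Finset ℕ)) : cond t P := by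
  have hp : P.parts = ∅ := Finpartition.parts_eq_empty_iff.2 rfl
  refine ⟨fun w x y z _ _ _ h _ => ?_, fun B hB => ?_, fun _ B hB => ?_⟩
  · obtain ⟨B, hB, -⟩ := h
    simp [hp] at hB
  · simp [hp] at hB
  · simp [hp] at hB

theorem cardT_empty (t : Bool) : cardT t ∅ = 1 := by
  rw [cardT, Nat.card_eq_one_iff_unique]
  constructor
  · constructor
    intro P Q
    have : Subsingleton (Finpartition (∅ : Finset ℕ)) :=
      ((inferInstance : Unique (Finpartition (⊥ : Finset ℕ)))).instSubsingleton
    exact Subtype.ext (this.allEq P.1 Q.1)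
  · exact ⟨⟨((inferInstance : Unique (Finpartition (⊥ : Finset ℕ)))).default, cond_empty t _⟩⟩

/-- split a Nat.card of a subtype along a decidable side condition -/
theorem card_split {α : Type*} [Finite α] (p q : α → Prop) :
    Nat.card {x : α // p x} =
      Nat.card {x : α // p x ∧ q x} + Nat.card {x : α // p x ∧ ¬ q x} := by
  classical
  rw [← Nat.card_sum]
  apply Nat.card_congr
  refine ⟨fun x => if h : q x.1 then Sum.inl ⟨x.1, x.2, h⟩ else Sum.inr ⟨x.1, x.2, h⟩,
    fun y => Sum.elim (fun z => ⟨z.1, z.2.1⟩) (fun z => ⟨z.1, z.2.1⟩) y, fun x => ?_, fun y => ?_⟩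
  · by_cases h : q x.1 <;> simp [h]
  · rcases y with z | z
    · simp [dif_pos z.2.2]
    · simp [dif_neg z.2.2]

theorem card_congr_iff {α : Type*} (p q : α → Prop) (h : ∀ x, p x ↔ q x) :
    Nat.card {x : α // p x} = Nat.card {x : α // q x} :=
  Nat.card_congr (Equiv.subtypeEquivRight h)



theorem part_unique {P : Finpartition s} {B C : Finset ℕ} {x : ℕ} (hB : B ∈ P.parts)
    (hC : C ∈ P.parts) (hxB : x ∈ B) (hxC : x ∈ C) : B = C := by
  rw [← P.part_eq_of_mem hB hxB, P.part_eq_of_mem hC hxC]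

theorem NC_of_subset {s s' : Finset ℕ} {P : Finpartition s} {Q : Finpartition s'}
    (hsub : Q.parts ⊆ P.parts) (h : NC P) : NC Q := by
  intro w x y z h1 h2 h3 hwy hxz
  obtain ⟨B, hB, hwB, hyB⟩ := hwy
  obtain ⟨C, hC, hxC, hzC⟩ := hxz
  obtain ⟨D, hD, hwD, hxD⟩ := h h1 h2 h3 ⟨B, hsub hB, hwB, hyB⟩ ⟨C, hsub hC, hxC, hzC⟩
  have hDB : D = B := part_unique hD (hsub hB) hwD hwB
  exact ⟨B, hB, hwB, hDB ▸ hxD⟩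

theorem EX_of_subset {s s' : Finset ℕ} {P : Finpartition s} {Q : Finpartition s'}
    (hsub : Q.parts ⊆ P.parts) (h : EX P) : EX Q := by
  intro B hB hcard x hx C hC u hu v hv h1 h2
  exact h B (hsub hB) hcard x hx C (hsub hC) u hu v hv h1 h2

theorem NS_of_subset {s s' : Finset ℕ} {P : Finpartition s} {Q : Finpartition s'}
    (hsub : Q.parts ⊆ P.parts) (h : NS P) : NS Q :=
  fun B hB => h B (hsub hB)

section CaseOne

variable (hs : s.Nonempty)

/-- remove the singleton block of the minimum -/
def delMin (P : Finpartition s) (h : {s.min' hs} ∈ P.parts) :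
    Finpartition (s.erase (s.min' hs)) := by
  refine Finpartition.ofSubset P (Finset.erase_subset {s.min' hs} P.parts) ?_
  ext x
  rw [Finset.mem_sup]
  constructor
  · rintro ⟨B, hB, hxB⟩
    rw [Finset.mem_erase] at hB ⊢
    refine ⟨?_, mem_of_mem_part hB.2 hxB⟩
    intro hxa
    subst hxa
    exact hB.1 (part_unique hB.2 h hxB (Finset.mem_singleton_self _))
  · intro hx
    rw [Finset.mem_erase] at hx
    refine ⟨P.part x, ?_, P.mem_part hx.2⟩
    rw [Finset.mem_erase]
    refine ⟨?_, P.part_mem.2 hx.2⟩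
    intro heq
    have := P.mem_part hx.2
    rw [heq, Finset.mem_singleton] at this
    exact hx.1 this

/-- add back the singleton block of the minimum -/
def addMin (Q : Finpartition (s.erase (s.min' hs))) : Finpartition s where
  parts := insert {s.min' hs} Q.parts
  supIndep := by
    rw [Finset.supIndep_iff_pairwiseDisjoint]
    intro B hB C hC hne
    show Disjoint B C
    simp only [Finset.coe_insert, Set.mem_insert_iff, Finset.mem_coe] at hB hC
    rcases hB with hB | hB <;> rcases hC with hC | hC
    · exact absurd (hB.trans hC.symm) hne
    · subst hB
      rw [Finset.disjoint_left]
      intro x hx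
      rw [Finset.mem_singleton] at hx
      subst hx
      intro hxC
      have := mem_of_mem_part hC hxC
      rw [Finset.mem_erase] at this
      exact this.1 rfl
    · subst hC
      rw [Finset.disjoint_right]
      intro x hx
      rw [Finset.mem_singleton] at hx
      subst hx
      intro hxB
      have := mem_of_mem_part hB hxB
      rw [Finset.mem_erase] at this
      exact this.1 rfl
    · exact Q.disjoint hB hC hne
  sup_parts := by
    rw [Finset.sup_insert, Q.sup_parts]
    have : ({s.min' hs} : Finset ℕ) ⊔ s.erase (s.min' hs) = insert (s.min' hs) (s.erase (s.min' hs)) := by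
      rw [Finset.sup_eq_union, ← Finset.insert_eq]
    rw [id_eq, this, Finset.insert_erase (s.min'_mem hs)]
  bot_notMem := by
    rw [Finset.mem_insert]
    push_neg
    constructor
    · intro h
      exact Finset.singleton_ne_empty _ h.symm
    · exact Q.bot_notMem

theorem card_case_one :
    Nat.card {P : Finpartition s // cond false P ∧ {s.min' hs} ∈ P.parts}
      = cardT false (s.erase (s.min' hs)) := by
  rw [cardT]
  apply Nat.card_congr
  refine ⟨fun P => ⟨delMin hs P.1 P.2.2, ?_⟩, fun Q => ⟨addMin hs Q.1, ?_, ?_⟩, ?_, ?_⟩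
  · -- cond false (delMin P)
    obtain ⟨⟨hNC, hEX, -⟩, hmem⟩ := P.2
    have hsub : (delMin hs P.1 hmem).parts ⊆ P.1.parts := Finset.erase_subset _ _
    exact ⟨NC_of_subset hsub hNC, EX_of_subset hsub hEX, by simp⟩
  · -- cond false (addMin Q)
    obtain ⟨hNC, hEX, -⟩ := Q.2
    have hsub : Q.1.parts ⊆ (addMin hs Q.1).parts := by
      intro B hB
      exact Finset.mem_insert_of_mem hB
    constructor
    · -- NC
      intro w x y z h1 h2 h3 hwy hxz
      obtain ⟨B, hB, hwB, hyB⟩ := hwy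
      obtain ⟨C, hC, hxC, hzC⟩ := hxz
      rw [show (addMin hs Q.1).parts = insert {s.min' hs} Q.1.parts from rfl,
        Finset.mem_insert] at hB hC
      have hB' : B ∈ Q.1.parts := by
        rcases hB with hB | hB
        · rw [hB, Finset.mem_singleton] at hwB hyB
          omega
        · exact hB
      have hC' : C ∈ Q.1.parts := by
        rcases hC with hC | hC
        · rw [hC, Finset.mem_singleton] at hxC hzC
          omega
        · exact hC
      obtain ⟨D, hD, h5, h6⟩ := hNC h1 h2 h3 ⟨B, hB', hwB, hyB⟩ ⟨C, hC', hxC, hzC⟩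
      exact ⟨D, hsub hD, h5, h6⟩
    constructor
    · -- EX
      intro B hB hcard x hx C hC u hu v hv h1 h2
      rw [show (addMin hs Q.1).parts = insert {s.min' hs} Q.1.parts from rfl,
        Finset.mem_insert] at hB hC
      have hC' : C ∈ Q.1.parts := by
        rcases hC with hC | hC
        · rw [hC, Finset.mem_singleton] at hu hv
          omega
        · exact hC
      rcases hB with hB | hB
      · -- B = {min}: impossible since u < x = min
        rw [hB, Finset.mem_singleton] at hx
        subst hx
        have hus : u ∈ s.erase (s.min' hs) := mem_of_mem_part hC' hu
        have := s.min'_le u (Finset.mem_of_mem_erase hus)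
        omega
      · exact hEX B hB hcard x hx C hC' u hu v hv h1 h2
    · simp
  · -- {min} ∈ parts
    exact Finset.mem_insert_self _ _
  · -- left inverse
    intro P
    apply Subtype.ext
    have : (addMin hs (delMin hs P.1 P.2.2)).parts = P.1.parts := by
      rw [show (addMin hs (delMin hs P.1 P.2.2)).parts
          = insert {s.min' hs} ((delMin hs P.1 P.2.2)).parts from rfl]
      rw [show (delMin hs P.1 P.2.2).parts = P.1.parts.erase {s.min' hs} from rfl]
      exact Finset.insert_erase P.2.2
    ext B
    rw [this]
  · -- right inverse
    intro Q
    apply Subtype.ext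
    have : (delMin hs (addMin hs Q.1) (Finset.mem_insert_self _ _)).parts = Q.1.parts := by
      show (addMin hs Q.1).parts.erase {s.min' hs} = Q.1.parts
      rw [show (addMin hs Q.1).parts = insert {s.min' hs} Q.1.parts from rfl]
      apply Finset.erase_insert
      intro hmem
      have := mem_of_mem_part hmem (Finset.mem_singleton_self (s.min' hs))
      rw [Finset.mem_erase] at this
      exact this.1 rfl
    ext B
    rw [this]

end CaseOne

section CaseTwo

variable {s : Finset ℕ} {P : Finpartition s} {a j : ℕ} {B0 : Finset ℕ}

def s1 (a j : ℕ) (s : Finset ℕ) : Finset ℕ := s.filter fun x => a < x ∧ x < j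
def s2 (j : ℕ) (s : Finset ℕ) : Finset ℕ := s.filter fun x => j < x

theorem mem_s1 {x : ℕ} : x ∈ s1 a j s ↔ x ∈ s ∧ a < x ∧ x < j := Finset.mem_filter
theorem mem_s2 {x : ℕ} : x ∈ s2 j s ↔ x ∈ s ∧ j < x := Finset.mem_filter

theorem parts_disjoint {B C : Finset ℕ} (hB : B ∈ P.parts) (hC : C ∈ P.parts) (hne : B ≠ C) :
    Disjoint B C :=
  Finset.disjoint_left.2 fun {x} hxB hxC => hne (part_unique hB hC hxB hxC)

/-- every part other than `B0` lies inside the middle or the tail region -/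
theorem region_split (hNC : NC P) (hmin : ∀ x ∈ s, a ≤ x) (hB0 : B0 ∈ P.parts)
    (haB0 : a ∈ B0) (hjB0 : j ∈ B0) (hmax : ∀ x ∈ B0, x ≤ j)
    {C : Finset ℕ} (hC : C ∈ P.parts) (hne : C ≠ B0) :
    C ⊆ s1 a j s ∨ C ⊆ s2 j s := by
  have hCs : ∀ x ∈ C, x ∈ s := fun x hx => mem_of_mem_part hC hx
  have hgt : ∀ x ∈ C, a < x := by
    intro x hx
    rcases Nat.lt_or_ge a x with h | h
    · exact h
    · have hxa : x = a := le_antisymm h (hmin x (hCs x hx))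
      subst hxa
      exact absurd (part_unique hC hB0 hx haB0) hne
  have hnej : ∀ x ∈ C, x ≠ j := by
    intro x hx hxj
    subst hxj
    exact hne (part_unique hC hB0 hx hjB0)
  have hnotboth : ¬ ((∃ u ∈ C, u < j) ∧ ∃ v ∈ C, j < v) := by
    rintro ⟨⟨u, hu, huj⟩, v, hv, hjv⟩
    obtain ⟨D, hD, haD, huD⟩ :=
      hNC (hgt u hu) huj hjv ⟨B0, hB0, haB0, hjB0⟩ ⟨C, hC, hu, hv⟩
    have hDB0 : D = B0 := part_unique hD hB0 haD haB0
    subst hDB0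
    exact hne (part_unique hC hD hu huD)
  by_cases hall : ∀ x ∈ C, x < j
  · left
    intro x hx
    exact mem_s1.2 ⟨hCs x hx, hgt x hx, hall x hx⟩
  · right
    push_neg at hall
    obtain ⟨v, hv, hjv⟩ := hall
    have hjv' : j < v := lt_of_le_of_ne hjv (Ne.symm (hnej v hv))
    intro x hx
    refine mem_s2.2 ⟨hCs x hx, ?_⟩
    rcases Nat.lt_or_ge x j with h | h
    · exact absurd ⟨⟨x, hx, h⟩, v, hv, hjv'⟩ hnotboth
    · exact lt_of_le_of_ne h (Ne.symm (hnej x hx))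

/-- the middle partition: parts of `P` inside the middle region, plus singletons
for the interior elements of `B0`. -/
def midParts (P : Finpartition s) (a j : ℕ) (B0 : Finset ℕ) : Finset (Finset ℕ) :=
  (P.parts.filter (· ⊆ s1 a j s)) ∪ (B0 \ {a, j}).image fun x => ({x} : Finset ℕ)

theorem mid_of_B0 (hmin : ∀ x ∈ s, a ≤ x) (hB0 : B0 ∈ P.parts)
    (hmax : ∀ x ∈ B0, x ≤ j) {x : ℕ} (hx : x ∈ B0 \ {a, j}) : x ∈ s1 a j s := by
  rw [Finset.mem_sdiff, Finset.mem_insert, Finset.mem_singleton] at hx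
  push_neg at hx
  obtain ⟨hxB0, hxa, hxj⟩ := hx
  have hxs : x ∈ s := mem_of_mem_part hB0 hxB0
  exact mem_s1.2 ⟨hxs, lt_of_le_of_ne (hmin x hxs) (Ne.symm hxa),
    lt_of_le_of_ne (hmax x hxB0) hxj⟩

theorem filter_part_ne_B0 (haB0 : a ∈ B0) {B : Finset ℕ}
    (hBsub : B ⊆ s1 a j s) : B ≠ B0 := by
  intro h
  subst h
  have := mem_s1.1 (hBsub haB0)
  omega

def mkQ1 (hNC : NC P) (hmin : ∀ x ∈ s, a ≤ x) (hB0 : B0 ∈ P.parts)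
    (haB0 : a ∈ B0) (hjB0 : j ∈ B0) (hmax : ∀ x ∈ B0, x ≤ j) :
    Finpartition (s1 a j s) where
  parts := midParts P a j B0
  supIndep := by
    rw [Finset.supIndep_iff_pairwiseDisjoint]
    intro B hB C hC hne
    show Disjoint B C
    simp only [midParts, Finset.coe_union, Set.mem_union, Finset.mem_coe,
      Finset.mem_filter, Finset.mem_image] at hB hC
    rcases hB with ⟨hBp, hBsub⟩ | ⟨x, hx, hxB⟩
    · rcases hC with ⟨hCp, hCsub⟩ | ⟨y, hy, hyC⟩
      · exact parts_disjoint hBp hCp hne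
      · subst hyC
        rw [Finset.disjoint_right]
        intro z hz
        rw [Finset.mem_singleton] at hz
        subst hz
        intro hzB
        exact filter_part_ne_B0 haB0 hBsub
          (part_unique hBp hB0 hzB (Finset.mem_sdiff.1 hy).1)
    · subst hxB
      rcases hC with ⟨hCp, hCsub⟩ | ⟨y, hy, hyC⟩
      · rw [Finset.disjoint_left]
        intro z hz
        rw [Finset.mem_singleton] at hz
        subst hz
        intro hzC
        exact filter_part_ne_B0 haB0 hCsub
          (part_unique hCp hB0 hzC (Finset.mem_sdiff.1 hx).1)
      · subst hyC
        rw [Finset.disjoint_left]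
        intro z hz hz'
        rw [Finset.mem_singleton] at hz hz'
        subst hz
        subst hz'
        exact hne rfl
  sup_parts := by
    ext x
    rw [Finset.mem_sup]
    constructor
    · rintro ⟨B, hB, hxB⟩
      simp only [id_eq] at hxB
      simp only [midParts, Finset.mem_union, Finset.mem_filter, Finset.mem_image] at hB
      rcases hB with ⟨hBp, hBsub⟩ | ⟨y, hy, hyB⟩
      · exact hBsub hxB
      · subst hyB
        rw [Finset.mem_singleton] at hxB
        subst hxB
        exact mid_of_B0 hmin hB0 hmax hy
    · intro hx
      have hxs : x ∈ s := (mem_s1.1 hx).1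
      by_cases hxB0 : x ∈ B0
      · refine ⟨{x}, ?_, Finset.mem_singleton_self x⟩
        simp only [midParts, Finset.mem_union, Finset.mem_image]
        right
        refine ⟨x, ?_, rfl⟩
        rw [Finset.mem_sdiff, Finset.mem_insert, Finset.mem_singleton]
        have hm := mem_s1.1 hx
        exact ⟨hxB0, by omega⟩
      · refine ⟨P.part x, ?_, P.mem_part hxs⟩
        simp only [midParts, Finset.mem_union, Finset.mem_filter]
        left
        refine ⟨P.part_mem.2 hxs, ?_⟩
        have hne : P.part x ≠ B0 := by
          intro h
          exact hxB0 (h ▸ P.mem_part hxs)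
        rcases region_split hNC hmin hB0 haB0 hjB0 hmax (P.part_mem.2 hxs) hne with h | h
        · exact h
        · have := mem_s2.1 (h (P.mem_part hxs))
          have := mem_s1.1 hx
          omega
  bot_notMem := by
    intro h
    simp only [midParts, Finset.mem_union, Finset.mem_filter, Finset.mem_image,
      Finset.bot_eq_empty] at h
    rcases h with ⟨hp, -⟩ | ⟨y, -, hy⟩
    · exact P.bot_notMem hp
    · exact Finset.singleton_ne_empty y hy

def mkQ2 (hNC : NC P) (hmin : ∀ x ∈ s, a ≤ x) (hB0 : B0 ∈ P.parts)
    (haB0 : a ∈ B0) (hjB0 : j ∈ B0) (hmax : ∀ x ∈ B0, x ≤ j) :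
    Finpartition (s2 j s) := by
  refine Finpartition.ofSubset P (Finset.filter_subset (· ⊆ s2 j s) P.parts) ?_
  ext x
  rw [Finset.mem_sup]
  constructor
  · rintro ⟨B, hB, hxB⟩
    simp only [id_eq] at hxB
    rw [Finset.mem_filter] at hB
    exact hB.2 hxB
  · intro hx
    have hxs : x ∈ s := (mem_s2.1 hx).1
    refine ⟨P.part x, ?_, P.mem_part hxs⟩
    rw [Finset.mem_filter]
    refine ⟨P.part_mem.2 hxs, ?_⟩
    have hne : P.part x ≠ B0 := by
      intro h
      have hxB0 : x ∈ B0 := h ▸ P.mem_part hxs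
      have := hmax x hxB0
      have := mem_s2.1 hx
      omega
    rcases region_split hNC hmin hB0 haB0 hjB0 hmax (P.part_mem.2 hxs) hne with h | h
    · have := mem_s1.1 (h (P.mem_part hxs))
      have := mem_s2.1 hx
      omega
    · exact h

/-- interior elements of the reconstructed block of `a` -/
def singF (a j : ℕ) (s : Finset ℕ) (Q1 : Finpartition (s1 a j s)) : Finset ℕ :=
  (s1 a j s).filter fun x => {x} ∈ Q1.parts

/-- the reconstructed block of `a` -/
def gB0 (a j : ℕ) (s : Finset ℕ) (Q1 : Finpartition (s1 a j s)) : Finset ℕ :=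
  insert a (insert j (singF a j s Q1))

variable {Q1 : Finpartition (s1 a j s)} {Q2 : Finpartition (s2 j s)}

theorem mem_gB0 {x : ℕ} :
    x ∈ gB0 a j s Q1 ↔ x = a ∨ x = j ∨ (x ∈ s1 a j s ∧ {x} ∈ Q1.parts) := by
  simp [gB0, singF, Finset.mem_insert, Finset.mem_filter, and_assoc]

theorem gB0_le (haj : a < j) : ∀ x ∈ gB0 a j s Q1, x ≤ j := by
  intro x hx
  rcases mem_gB0.1 hx with h | h | h
  · omega
  · omega
  · have := mem_s1.1 h.1
    omega

theorem gB0_ge (haj : a < j) : ∀ x ∈ gB0 a j s Q1, a ≤ x := by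
  intro x hx
  rcases mem_gB0.1 hx with h | h | h
  · omega
  · omega
  · have := mem_s1.1 h.1
    omega

theorem a_mem_gB0 : a ∈ gB0 a j s Q1 := Finset.mem_insert_self _ _
theorem j_mem_gB0 : j ∈ gB0 a j s Q1 :=
  Finset.mem_insert_of_mem (Finset.mem_insert_self _ _)

theorem a_not_mem_s1 : a ∉ s1 a j s := by
  intro h
  have := mem_s1.1 h
  omega

theorem j_not_mem_s1 : j ∉ s1 a j s := by
  intro h
  have := mem_s1.1 h
  omega

theorem a_not_mem_s2 (haj : a < j) : a ∉ s2 j s := by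
  intro h
  have := mem_s2.1 h
  omega

theorem j_not_mem_s2 : j ∉ s2 j s := by
  intro h
  have := mem_s2.1 h
  omega

theorem gB0_disj_s1part {C : Finset ℕ} (haj : a < j) (hC : C ∈ Q1.parts)
    (hcard : 2 ≤ C.card) : Disjoint (gB0 a j s Q1) C := by
  rw [Finset.disjoint_left]
  intro x hx hxC
  have hCsub : C ⊆ s1 a j s := Q1.le hC
  rcases mem_gB0.1 hx with h | h | h
  · subst h
    exact a_not_mem_s1 (hCsub hxC)
  · subst h
    exact j_not_mem_s1 (hCsub hxC)
  · have : ({x} : Finset ℕ) = C := part_unique h.2 hC (Finset.mem_singleton_self x) hxC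
    rw [← this] at hcard
    simp at hcard

theorem gB0_disj_s2part {C : Finset ℕ} (haj : a < j) (hC : C ∈ Q2.parts) :
    Disjoint (gB0 a j s Q1) C := by
  rw [Finset.disjoint_left]
  intro x hx hxC
  have hxs2 := mem_s2.1 (Q2.le hC hxC)
  have := gB0_le haj x hx
  omega

end CaseTwo

section CaseTwoB

variable {s : Finset ℕ} {P : Finpartition s} {a j : ℕ} {B0 : Finset ℕ}

/-- glue the middle and tail partitions back together -/
def glue (has : a ∈ s) (hjs : j ∈ s) (haj : a < j) (hmin : ∀ x ∈ s, a ≤ x)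
    (R1 : Finpartition (s1 a j s)) (R2 : Finpartition (s2 j s)) : Finpartition s where
  parts := insert (gB0 a j s R1) ((R1.parts.filter fun B => 2 ≤ B.card) ∪ R2.parts)
  supIndep := by
    rw [Finset.supIndep_iff_pairwiseDisjoint]
    intro B hB C hC hne
    show Disjoint B C
    simp only [Finset.coe_insert, Set.mem_insert_iff, Finset.mem_coe, Finset.mem_union,
      Finset.mem_filter] at hB hC
    rcases hB with hB | ⟨hB, hBc⟩ | hB <;> rcases hC with hC | ⟨hC, hCc⟩ | hC
    · exact absurd (hB.trans hC.symm) hne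
    · subst hB
      exact gB0_disj_s1part haj hC hCc
    · subst hB
      exact gB0_disj_s2part haj hC
    · subst hC
      exact (gB0_disj_s1part haj hB hBc).symm
    · exact parts_disjoint hB hC hne
    · rw [Finset.disjoint_left]
      intro x hxB hxC
      have h1 := mem_s1.1 (R1.le hB hxB)
      have h2 := mem_s2.1 (R2.le hC hxC)
      omega
    · subst hC
      exact (gB0_disj_s2part haj hB).symm
    · rw [Finset.disjoint_left]
      intro x hxB hxC
      have h1 := mem_s1.1 (R1.le hC hxC)
      have h2 := mem_s2.1 (R2.le hB hxB)
      omega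
    · exact parts_disjoint hB hC hne
  sup_parts := by
    ext x
    rw [Finset.mem_sup]
    constructor
    · rintro ⟨B, hB, hxB⟩
      simp only [id_eq] at hxB
      simp only [Finset.mem_insert, Finset.mem_union, Finset.mem_filter] at hB
      rcases hB with hB | ⟨hB, -⟩ | hB
      · subst hB
        rcases mem_gB0.1 hxB with h | h | h
        · subst h; exact has
        · subst h; exact hjs
        · exact (mem_s1.1 h.1).1
      · exact (mem_s1.1 (R1.le hB hxB)).1
      · exact (mem_s2.1 (R2.le hB hxB)).1
    · intro hxs
      by_cases hxa : x = a
      · subst hxa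
        exact ⟨gB0 x j s R1, Finset.mem_insert_self _ _, a_mem_gB0⟩
      by_cases hxj : x = j
      · subst hxj
        exact ⟨gB0 a x s R1, Finset.mem_insert_self _ _, j_mem_gB0⟩
      have hax : a < x := lt_of_le_of_ne (hmin x hxs) (Ne.symm hxa)
      rcases Nat.lt_or_ge x j with hxlt | hxge
      · -- x in the middle region
        have hx1 : x ∈ s1 a j s := mem_s1.2 ⟨hxs, hax, hxlt⟩
        have hpm := R1.part_mem.2 hx1
        have hxp := R1.mem_part hx1
        rcases Nat.lt_or_ge (R1.part x).card 2 with hc | hc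
        · -- singleton part
          have hne : (R1.part x).Nonempty := ⟨x, hxp⟩
          have hcard : (R1.part x).card = 1 := by
            have := Finset.card_pos.2 hne
            omega
          obtain ⟨y, hy⟩ := Finset.card_eq_one.1 hcard
          have hxy : x = y := by
            rw [hy, Finset.mem_singleton] at hxp
            exact hxp
          refine ⟨gB0 a j s R1, Finset.mem_insert_self _ _, ?_⟩
          refine mem_gB0.2 (Or.inr (Or.inr ⟨hx1, ?_⟩))
          rw [← hxy] at hy
          rw [← hy]
          exact hpm
        · refine ⟨R1.part x, ?_, hxp⟩
          simp only [Finset.mem_insert, Finset.mem_union, Finset.mem_filter]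
          exact Or.inr (Or.inl ⟨hpm, hc⟩)
      · have hx2 : x ∈ s2 j s := mem_s2.2 ⟨hxs, by omega⟩
        refine ⟨R2.part x, ?_, R2.mem_part hx2⟩
        simp only [Finset.mem_insert, Finset.mem_union]
        exact Or.inr (Or.inr (R2.part_mem.2 hx2))
  bot_notMem := by
    simp only [Finset.bot_eq_empty, Finset.mem_insert, Finset.mem_union, Finset.mem_filter]
    push_neg
    refine ⟨?_, ⟨?_, ?_⟩⟩
    · intro h
      have : a ∈ (∅ : Finset ℕ) := h ▸ a_mem_gB0
      simp at this
    · intro h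
      exact absurd h R1.bot_notMem
    · exact R2.bot_notMem

variable {Q1 : Finpartition (s1 a j s)} {Q2 : Finpartition (s2 j s)}

theorem mem_midParts {B : Finset ℕ} :
    B ∈ midParts P a j B0 ↔
      (B ∈ P.parts ∧ B ⊆ s1 a j s) ∨ ∃ x ∈ B0 \ {a, j}, B = {x} := by
  simp only [midParts, Finset.mem_union, Finset.mem_filter, Finset.mem_image]
  constructor
  · rintro (⟨h1, h2⟩ | ⟨x, hx, hxB⟩)
    · exact Or.inl ⟨h1, h2⟩
    · exact Or.inr ⟨x, hx, hxB.symm⟩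
  · rintro (⟨h1, h2⟩ | ⟨x, hx, hxB⟩)
    · exact Or.inl ⟨h1, h2⟩
    · exact Or.inr ⟨x, hx, hxB.symm⟩

theorem mkQ1_parts (hNC : NC P) (hmin : ∀ x ∈ s, a ≤ x) (hB0 : B0 ∈ P.parts)
    (haB0 : a ∈ B0) (hjB0 : j ∈ B0) (hmax : ∀ x ∈ B0, x ≤ j) :
    (mkQ1 hNC hmin hB0 haB0 hjB0 hmax).parts = midParts P a j B0 := rfl

theorem mkQ2_parts (hNC : NC P) (hmin : ∀ x ∈ s, a ≤ x) (hB0 : B0 ∈ P.parts)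
    (haB0 : a ∈ B0) (hjB0 : j ∈ B0) (hmax : ∀ x ∈ B0, x ≤ j) :
    (mkQ2 hNC hmin hB0 haB0 hjB0 hmax).parts = P.parts.filter (· ⊆ s2 j s) := rfl

theorem cond_mkQ1 (hNC : NC P) (hEX : EX P) (hmin : ∀ x ∈ s, a ≤ x) (hB0 : B0 ∈ P.parts)
    (haB0 : a ∈ B0) (hjB0 : j ∈ B0) (hmax : ∀ x ∈ B0, x ≤ j) :
    cond false (mkQ1 hNC hmin hB0 haB0 hjB0 hmax) := by
  refine ⟨?_, ?_, by simp⟩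
  · -- NC
    intro w x y z h1 h2 h3 hwy hxz
    obtain ⟨B, hB, hwB, hyB⟩ := hwy
    obtain ⟨C, hC, hxC, hzC⟩ := hxz
    rw [mkQ1_parts, mem_midParts] at hB hC
    have hB' : B ∈ P.parts := by
      rcases hB with h | ⟨x', _, hB⟩
      · exact h.1
      · rw [hB, Finset.mem_singleton] at hwB hyB
        omega
    have hC' : C ∈ P.parts := by
      rcases hC with h | ⟨x', _, hC⟩
      · exact h.1
      · rw [hC, Finset.mem_singleton] at hxC hzC
        omega
    obtain ⟨D, hD, hwD, hxD⟩ := hNC h1 h2 h3 ⟨B, hB', hwB, hyB⟩ ⟨C, hC', hxC, hzC⟩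
    have hDB : D = B := part_unique hD hB' hwD hwB
    refine ⟨B, ?_, hwB, hDB ▸ hxD⟩
    rw [mkQ1_parts, mem_midParts]
    exact hB
  · -- EX
    intro B hB hcard x hx C hC u hu v hv h1 h2
    rw [mkQ1_parts, mem_midParts] at hB hC
    rcases hB with ⟨hBp, hBsub⟩ | ⟨y, hy, hyB⟩
    · -- genuine singleton of P in the middle region : contradicts EX P via B0
      have hxs1 := mem_s1.1 (hBsub hx)
      exact hEX B hBp hcard x hx B0 hB0 a haB0 j hjB0 hxs1.2.1 hxs1.2.2
    · -- x is an interior element of B0 : spanning contradicts NC P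
      have hxy : x = y := by rw [hyB, Finset.mem_singleton] at hx; exact hx
      subst hxy
      have hxB0 : x ∈ B0 := (Finset.mem_sdiff.1 hy).1
      have hC' : C ∈ P.parts ∧ C ⊆ s1 a j s := by
        rcases hC with h | ⟨x', _, hC⟩
        · exact h
        · rw [hC, Finset.mem_singleton] at hu hv
          omega
      have hau : a < u := (mem_s1.1 (hC'.2 hu)).2.1
      obtain ⟨D, hD, haD, huD⟩ :=
        hNC hau h1 h2 ⟨B0, hB0, haB0, hxB0⟩ ⟨C, hC'.1, hu, hv⟩
      have hDB0 : D = B0 := part_unique hD hB0 haD haB0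
      subst hDB0
      exact filter_part_ne_B0 haB0 hC'.2 (part_unique hC'.1 hD hu huD)

theorem cond_mkQ2 {t : Bool} (hc : cond t P) (hNC : NC P) (hmin : ∀ x ∈ s, a ≤ x)
    (hB0 : B0 ∈ P.parts) (haB0 : a ∈ B0) (hjB0 : j ∈ B0) (hmax : ∀ x ∈ B0, x ≤ j) :
    cond t (mkQ2 hNC hmin hB0 haB0 hjB0 hmax) := by
  have hsub : (mkQ2 hNC hmin hB0 haB0 hjB0 hmax).parts ⊆ P.parts := by
    rw [mkQ2_parts]
    exact Finset.filter_subset _ _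
  exact ⟨NC_of_subset hsub hc.1, EX_of_subset hsub hc.2.1,
    fun ht => NS_of_subset hsub (hc.2.2 ht)⟩

theorem mem_glue_parts {has : a ∈ s} {hjs : j ∈ s} {haj : a < j} {hmin : ∀ x ∈ s, a ≤ x}
    {B : Finset ℕ} :
    B ∈ (glue has hjs haj hmin Q1 Q2).parts ↔
      B = gB0 a j s Q1 ∨ (B ∈ Q1.parts ∧ 2 ≤ B.card) ∨ B ∈ Q2.parts := by
  show B ∈ insert (gB0 a j s Q1) ((Q1.parts.filter fun B => 2 ≤ B.card) ∪ Q2.parts) ↔ _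
  simp only [Finset.mem_insert, Finset.mem_union, Finset.mem_filter]

theorem NC_glue (has : a ∈ s) (hjs : j ∈ s) (haj : a < j) (hmin : ∀ x ∈ s, a ≤ x)
    (hNC1 : NC Q1) (hEX1 : EX Q1) (hNC2 : NC Q2) :
    NC (glue has hjs haj hmin Q1 Q2) := by
  intro w x y z h1 h2 h3 hwy hxz
  obtain ⟨B, hB, hwB, hyB⟩ := hwy
  obtain ⟨C, hC, hxC, hzC⟩ := hxz
  by_cases hBC : B = C
  · exact ⟨B, hB, hwB, hBC ▸ hxC⟩
  rw [mem_glue_parts] at hB hC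
  rcases hB with hB | ⟨hB, hBc⟩ | hB <;> rcases hC with hC | ⟨hC, hCc⟩ | hC
  · exact absurd (hB.trans hC.symm) hBC
  · -- B = gB0, C middle : y is interior of gB0, spanned in Q1 - contradiction with EX Q1
    subst hB
    have hys1 : y ∈ s1 a j s := by
      have hy2 : y < j := by
        have := mem_s1.1 (Q1.le hC hzC)
        omega
      have hy1 : a < y := by
        have := mem_s1.1 (Q1.le hC hxC)
        omega
      have hyle := gB0_le haj y hyB
      have hyge := gB0_ge haj y hyB
      exact mem_s1.2 ⟨by
        rcases mem_gB0.1 hyB with h | h | h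
        · omega
        · omega
        · exact (mem_s1.1 h.1).1, hy1, hy2⟩
    have hysing : ({y} : Finset ℕ) ∈ Q1.parts := by
      rcases mem_gB0.1 hyB with h | h | h
      · have := mem_s1.1 hys1; omega
      · have := mem_s1.1 hys1; omega
      · exact h.2
    exact absurd (hEX1 {y} hysing (Finset.card_singleton y) y
      (Finset.mem_singleton_self y) C hC x hxC z hzC h2 h3) (by simp)
  · -- B = gB0, C tail : impossible since x < y ≤ j < x
    subst hB
    have := gB0_le haj y hyB
    have := mem_s2.1 (Q2.le hC hxC)
    omega
  · -- B middle, C = gB0 : x is interior of gB0, spanned by B in Q1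
    subst hC
    have hxs1 : x ∈ s1 a j s := by
      have h1' := mem_s1.1 (Q1.le hB hwB)
      have h2' := mem_s1.1 (Q1.le hB hyB)
      exact mem_s1.2 ⟨by
        rcases mem_gB0.1 hxC with h | h | h
        · omega
        · omega
        · exact (mem_s1.1 h.1).1, by omega, by omega⟩
    have hxsing : ({x} : Finset ℕ) ∈ Q1.parts := by
      rcases mem_gB0.1 hxC with h | h | h
      · have := mem_s1.1 hxs1; omega
      · have := mem_s1.1 hxs1; omega
      · exact h.2
    exact absurd (hEX1 {x} hxsing (Finset.card_singleton x) x
      (Finset.mem_singleton_self x) B hB w hwB y hyB h1 h2) (by simp)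
  · -- both middle
    obtain ⟨D, hD, hwD, hxD⟩ := hNC1 h1 h2 h3 ⟨B, hB, hwB, hyB⟩ ⟨C, hC, hxC, hzC⟩
    refine ⟨D, ?_, hwD, hxD⟩
    rw [mem_glue_parts]
    exact Or.inr (Or.inl ⟨hD, Finset.one_lt_card.2 ⟨w, hwD, x, hxD, by omega⟩⟩)
  · -- B middle, C tail : x < y < j < x impossible
    have := mem_s1.1 (Q1.le hB hyB)
    have := mem_s2.1 (Q2.le hC hxC)
    omega
  · -- B tail, C = gB0 : w < z ≤ j < w impossible
    subst hC
    have := mem_s2.1 (Q2.le hB hwB)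
    have := gB0_le haj z hzC
    omega
  · -- B tail, C middle : j < w < x and x < j impossible
    have := mem_s2.1 (Q2.le hB hwB)
    have := mem_s1.1 (Q1.le hC hxC)
    omega
  · -- both tail
    obtain ⟨D, hD, hwD, hxD⟩ := hNC2 h1 h2 h3 ⟨B, hB, hwB, hyB⟩ ⟨C, hC, hxC, hzC⟩
    refine ⟨D, ?_, hwD, hxD⟩
    rw [mem_glue_parts]
    exact Or.inr (Or.inr hD)

theorem gB0_card (haj : a < j) : 2 ≤ (gB0 a j s Q1).card :=
  Finset.one_lt_card.2 ⟨a, a_mem_gB0, j, j_mem_gB0, by omega⟩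

theorem NS_glue (has : a ∈ s) (hjs : j ∈ s) (haj : a < j) (hmin : ∀ x ∈ s, a ≤ x)
    (hNS2 : NS Q2) : NS (glue has hjs haj hmin Q1 Q2) := by
  intro B hB
  rw [mem_glue_parts] at hB
  rcases hB with hB | ⟨hB, hBc⟩ | hB
  · exact hB ▸ gB0_card haj
  · exact hBc
  · exact hNS2 B hB

theorem EX_glue (has : a ∈ s) (hjs : j ∈ s) (haj : a < j) (hmin : ∀ x ∈ s, a ≤ x)
    (hEX2 : EX Q2) : EX (glue has hjs haj hmin Q1 Q2) := by
  intro B hB hcard x hx C hC u hu v hv h1 h2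
  rw [mem_glue_parts] at hB hC
  rcases hB with hB | ⟨hB, hBc⟩ | hB
  · subst hB
    have := gB0_card (Q1 := Q1) haj
    omega
  · omega
  · -- B is a tail singleton
    have hxs2 := mem_s2.1 (Q2.le hB hx)
    rcases hC with hC | ⟨hC, hCc⟩ | hC
    · subst hC
      have := gB0_le haj v hv
      omega
    · have := mem_s1.1 (Q1.le hC hv)
      omega
    · exact hEX2 B hB hcard x hx C hC u hu v hv h1 h2

theorem no_mid_singleton (hEX : EX P) (hB0 : B0 ∈ P.parts) (haB0 : a ∈ B0) (hjB0 : j ∈ B0)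
    {x : ℕ} (hx : {x} ∈ P.parts) (hxs1 : x ∈ s1 a j s) : False :=
  hEX {x} hx (Finset.card_singleton x) x (Finset.mem_singleton_self x) B0 hB0 a haB0 j hjB0
    (mem_s1.1 hxs1).2.1 (mem_s1.1 hxs1).2.2

theorem two_le_mid (hEX : EX P) (hB0 : B0 ∈ P.parts) (haB0 : a ∈ B0) (hjB0 : j ∈ B0)
    {B : Finset ℕ} (hBp : B ∈ P.parts) (hBsub : B ⊆ s1 a j s) : 2 ≤ B.card := by
  have hne : B.Nonempty := Finset.nonempty_iff_ne_empty.2 (P.ne_bot hBp)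
  rcases Nat.lt_or_ge B.card 2 with h | h
  · have hcard : B.card = 1 := by
      have := Finset.card_pos.2 hne
      omega
    obtain ⟨x, hx⟩ := Finset.card_eq_one.1 hcard
    subst hx
    exact absurd (no_mid_singleton hEX hB0 haB0 hjB0 hBp
      (hBsub (Finset.mem_singleton_self x))) not_false
  · exact h

theorem gB0_mk (hNC : NC P) (hEX : EX P) (hmin : ∀ x ∈ s, a ≤ x) (hB0 : B0 ∈ P.parts)
    (haB0 : a ∈ B0) (hjB0 : j ∈ B0) (hmax : ∀ x ∈ B0, x ≤ j) :
    gB0 a j s (mkQ1 hNC hmin hB0 haB0 hjB0 hmax) = B0 := by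
  ext x
  rw [mem_gB0]
  constructor
  · rintro (h | h | ⟨hxs1, hxp⟩)
    · subst h; exact haB0
    · subst h; exact hjB0
    · rw [mkQ1_parts, mem_midParts] at hxp
      rcases hxp with ⟨hp, -⟩ | ⟨y, hy, hxy⟩
      · exact absurd (no_mid_singleton hEX hB0 haB0 hjB0 hp hxs1) not_false
      · have : x = y := by
          have := Finset.mem_singleton_self x
          rw [hxy, Finset.mem_singleton] at this
          exact this
        subst this
        exact (Finset.mem_sdiff.1 hy).1
  · intro hxB0
    by_cases hxa : x = a
    · exact Or.inl hxa
    by_cases hxj : x = j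
    · exact Or.inr (Or.inl hxj)
    have hmem : x ∈ B0 \ {a, j} := by
      rw [Finset.mem_sdiff, Finset.mem_insert, Finset.mem_singleton]
      exact ⟨hxB0, by omega⟩
    refine Or.inr (Or.inr ⟨mid_of_B0 hmin hB0 hmax hmem, ?_⟩)
    rw [mkQ1_parts, mem_midParts]
    exact Or.inr ⟨x, hmem, rfl⟩

theorem glue_mk (has : a ∈ s) (hjs : j ∈ s) (haj : a < j) (hNC : NC P) (hEX : EX P)
    (hmin : ∀ x ∈ s, a ≤ x) (hB0 : B0 ∈ P.parts)
    (haB0 : a ∈ B0) (hjB0 : j ∈ B0) (hmax : ∀ x ∈ B0, x ≤ j) :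
    glue has hjs haj hmin (mkQ1 hNC hmin hB0 haB0 hjB0 hmax)
      (mkQ2 hNC hmin hB0 haB0 hjB0 hmax) = P := by
  have hparts : (glue has hjs haj hmin (mkQ1 hNC hmin hB0 haB0 hjB0 hmax)
      (mkQ2 hNC hmin hB0 haB0 hjB0 hmax)).parts = P.parts := by
    ext B
    rw [mem_glue_parts, gB0_mk hNC hEX hmin hB0 haB0 hjB0 hmax]
    constructor
    · rintro (h | ⟨hB, hBc⟩ | hB)
      · subst h; exact hB0
      · rw [mkQ1_parts, mem_midParts] at hB
        rcases hB with ⟨hp, -⟩ | ⟨y, hy, hBy⟩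
        · exact hp
        · subst hBy
          simp at hBc
      · rw [mkQ2_parts, Finset.mem_filter] at hB
        exact hB.1
    · intro hB
      by_cases hBB0 : B = B0
      · exact Or.inl hBB0
      rcases region_split hNC hmin hB0 haB0 hjB0 hmax hB hBB0 with h | h
      · refine Or.inr (Or.inl ⟨?_, two_le_mid hEX hB0 haB0 hjB0 hB h⟩)
        rw [mkQ1_parts, mem_midParts]
        exact Or.inl ⟨hB, h⟩
      · refine Or.inr (Or.inr ?_)
        rw [mkQ2_parts, Finset.mem_filter]
        exact ⟨hB, h⟩
  ext B
  rw [hparts]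

theorem glue_part_a (has : a ∈ s) (hjs : j ∈ s) (haj : a < j) (hmin : ∀ x ∈ s, a ≤ x) :
    (glue has hjs haj hmin Q1 Q2).part a = gB0 a j s Q1 :=
  Finpartition.part_eq_of_mem _ (mem_glue_parts.2 (Or.inl rfl)) a_mem_gB0

theorem gB0_max' (haj : a < j) (h : (gB0 a j s Q1).Nonempty) :
    (gB0 a j s Q1).max' h = j := by
  apply le_antisymm
  · exact Finset.max'_le _ _ _ (gB0_le haj)
  · exact Finset.le_max' _ _ j_mem_gB0

theorem mkQ1_glue (has : a ∈ s) (hjs : j ∈ s) (haj : a < j) (hmin : ∀ x ∈ s, a ≤ x)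
    (hNCg : NC (glue has hjs haj hmin Q1 Q2))
    (hB0 : gB0 a j s Q1 ∈ (glue has hjs haj hmin Q1 Q2).parts)
    (haB0 : a ∈ gB0 a j s Q1) (hjB0 : j ∈ gB0 a j s Q1)
    (hmax : ∀ x ∈ gB0 a j s Q1, x ≤ j) :
    midParts (glue has hjs haj hmin Q1 Q2) a j (gB0 a j s Q1) = Q1.parts := by
  ext B
  rw [mem_midParts]
  constructor
  · rintro (⟨hB, hBsub⟩ | ⟨x, hx, hBx⟩)
    · rw [mem_glue_parts] at hB
      rcases hB with hB | ⟨hB, -⟩ | hB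
      · subst hB
        exact absurd (hBsub a_mem_gB0) a_not_mem_s1
      · exact hB
      · obtain ⟨y, hy⟩ := Finset.nonempty_iff_ne_empty.2 (Q2.ne_bot hB)
        have h1 := mem_s2.1 (Q2.le hB hy)
        have h2 := mem_s1.1 (hBsub hy)
        omega
    · -- B = {x}, x interior of gB0
      subst hBx
      rw [Finset.mem_sdiff, Finset.mem_insert, Finset.mem_singleton] at hx
      rcases mem_gB0.1 hx.1 with h | h | h
      · omega
      · omega
      · exact h.2
  · intro hB
    have hBsub : B ⊆ s1 a j s := Q1.le hB
    rcases Nat.lt_or_ge B.card 2 with h | h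
    · have hne : B.Nonempty := Finset.nonempty_iff_ne_empty.2 (Q1.ne_bot hB)
      have hcard : B.card = 1 := by
        have := Finset.card_pos.2 hne
        omega
      obtain ⟨x, hx⟩ := Finset.card_eq_one.1 hcard
      subst hx
      refine Or.inr ⟨x, ?_, rfl⟩
      have hxs1 : x ∈ s1 a j s := hBsub (Finset.mem_singleton_self x)
      rw [Finset.mem_sdiff, Finset.mem_insert, Finset.mem_singleton]
      have hm := mem_s1.1 hxs1
      refine ⟨mem_gB0.2 (Or.inr (Or.inr ⟨hxs1, hB⟩)), by omega⟩
    · refine Or.inl ⟨?_, hBsub⟩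
      rw [mem_glue_parts]
      exact Or.inr (Or.inl ⟨hB, h⟩)

theorem mkQ2_glue (has : a ∈ s) (hjs : j ∈ s) (haj : a < j) (hmin : ∀ x ∈ s, a ≤ x) :
    (glue has hjs haj hmin Q1 Q2).parts.filter (· ⊆ s2 j s) = Q2.parts := by
  ext B
  rw [Finset.mem_filter, mem_glue_parts]
  constructor
  · rintro ⟨hB | ⟨hB, -⟩ | hB, hBsub⟩
    · subst hB
      exact absurd (hBsub a_mem_gB0) (a_not_mem_s2 haj)
    · obtain ⟨y, hy⟩ := Finset.nonempty_iff_ne_empty.2 (Q1.ne_bot hB)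
      have h1 := mem_s1.1 (Q1.le hB hy)
      have h2 := mem_s2.1 (hBsub hy)
      omega
    · exact hB
  · intro hB
    exact ⟨Or.inr (Or.inr hB), Q2.le hB⟩

theorem card_fiber_sum {α : Type*} [Finite α] {t : Finset ℕ} (f : α → ℕ)
    (hf : ∀ x, f x ∈ t) :
    Nat.card α = ∑ j ∈ t, Nat.card {x : α // f x = j} := by
  classical
  letI : Fintype α := Fintype.ofFinite α
  rw [Nat.card_eq_fintype_card, ← Finset.card_univ,
    Finset.card_eq_sum_card_fiberwise (fun x _ => hf x)]
  refine Finset.sum_congr rfl fun j _ => ?_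
  rw [Nat.card_eq_fintype_card, Fintype.card_subtype]

end CaseTwoB

section Fiber

variable {s : Finset ℕ}

theorem card_fiber (t : Bool) (hs : s.Nonempty) {j : ℕ} (hjs : j ∈ s)
    (haj : s.min' hs < j) :
    Nat.card {x : {P : Finpartition s // cond t P ∧ 2 ≤ (P.part (s.min' hs)).card} //
        (x.1.part (s.min' hs)).max' ⟨s.min' hs, x.1.mem_part (s.min'_mem hs)⟩ = j}
      = cardT false (s1 (s.min' hs) j s) * cardT t (s2 j s) := by
  have has : s.min' hs ∈ s := s.min'_mem hs
  have hmin : ∀ x ∈ s, s.min' hs ≤ x := fun x hx => s.min'_le x hx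
  rw [cardT, cardT, ← Nat.card_prod]
  refine (Nat.card_eq_of_bijective (fun q =>
    ⟨⟨glue has hjs haj hmin q.1.1 q.2.1,
      ⟨NC_glue has hjs haj hmin q.1.2.1 q.1.2.2.1 q.2.2.1,
        EX_glue has hjs haj hmin q.2.2.2.1,
        fun ht => NS_glue has hjs haj hmin (q.2.2.2.2 ht)⟩,
      by rw [glue_part_a]; exact gB0_card haj⟩,
      by simp only [glue_part_a has hjs haj hmin]; exact gB0_max' haj _⟩) ?_).symm
  constructor
  · -- injective
    rintro ⟨⟨Q1, h1⟩, ⟨Q2, h2⟩⟩ ⟨⟨Q1', h1'⟩, ⟨Q2', h2'⟩⟩ heq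
    have hg : glue has hjs haj hmin Q1 Q2 = glue has hjs haj hmin Q1' Q2' := by
      have := congrArg (fun z => z.1.1) heq
      exact this
    have hparts : (glue has hjs haj hmin Q1 Q2).parts
        = (glue has hjs haj hmin Q1' Q2').parts := by rw [hg]
    have hB0eq : gB0 (s.min' hs) j s Q1 = gB0 (s.min' hs) j s Q1' := by
      rw [← glue_part_a has hjs haj hmin (Q1 := Q1) (Q2 := Q2),
        ← glue_part_a has hjs haj hmin (Q1 := Q1') (Q2 := Q2'), hg]
    have hQ2 : Q2 = Q2' := by
      have e1 := mkQ2_glue has hjs haj hmin (Q1 := Q1) (Q2 := Q2)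
      have e2 := mkQ2_glue has hjs haj hmin (Q1 := Q1') (Q2 := Q2')
      have : Q2.parts = Q2'.parts := by rw [← e1, ← e2, hg]
      ext B
      rw [this]
    have hQ1 : Q1 = Q1' := by
      have e1 := mkQ1_glue has hjs haj hmin
        (NC_glue has hjs haj hmin h1.1 h1.2.1 h2.1)
        (mem_glue_parts.2 (Or.inl rfl)) a_mem_gB0 j_mem_gB0 (gB0_le haj)
        (Q2 := Q2)
      have e2 := mkQ1_glue has hjs haj hmin
        (NC_glue has hjs haj hmin h1'.1 h1'.2.1 h2'.1)
        (mem_glue_parts.2 (Or.inl rfl)) a_mem_gB0 j_mem_gB0 (gB0_le haj)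
        (Q2 := Q2')
      have : Q1.parts = Q1'.parts := by
        rw [← e1, ← e2, hg, hB0eq]
      ext B
      rw [this]
    exact Prod.ext (Subtype.ext hQ1) (Subtype.ext hQ2)
  · -- surjective
    rintro ⟨⟨P, hc, h2⟩, hfx⟩
    have hB0 : P.part (s.min' hs) ∈ P.parts := P.part_mem.2 has
    have haB0 : s.min' hs ∈ P.part (s.min' hs) := P.mem_part has
    have hjB0 : j ∈ P.part (s.min' hs) := hfx ▸ Finset.max'_mem _ _
    have hmax : ∀ x ∈ P.part (s.min' hs), x ≤ j := fun x hx => hfx ▸ Finset.le_max' _ x hx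
    refine ⟨⟨⟨mkQ1 hc.1 hmin hB0 haB0 hjB0 hmax,
      cond_mkQ1 hc.1 hc.2.1 hmin hB0 haB0 hjB0 hmax⟩,
      ⟨mkQ2 hc.1 hmin hB0 haB0 hjB0 hmax,
      cond_mkQ2 hc hc.1 hmin hB0 haB0 hjB0 hmax⟩⟩, ?_⟩
    apply Subtype.ext
    apply Subtype.ext
    exact glue_mk has hjs haj hc.1 hc.2.1 hmin hB0 haB0 hjB0 hmax

theorem card_case_two (t : Bool) (hs : s.Nonempty) :
    Nat.card {P : Finpartition s // cond t P ∧ 2 ≤ (P.part (s.min' hs)).card}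
      = ∑ j ∈ s.filter (fun x => s.min' hs < x),
          cardT false (s1 (s.min' hs) j s) * cardT t (s2 j s) := by
  have hf : ∀ x : {P : Finpartition s // cond t P ∧ 2 ≤ (P.part (s.min' hs)).card},
      (x.1.part (s.min' hs)).max' ⟨s.min' hs, x.1.mem_part (s.min'_mem hs)⟩
        ∈ s.filter (fun x => s.min' hs < x) := by
    rintro ⟨P, hc, h2⟩
    have has : s.min' hs ∈ s := s.min'_mem hs
    set B0 := P.part (s.min' hs) with hB0def
    have hB0 : B0 ∈ P.parts := P.part_mem.2 has
    have hne : B0.Nonempty := ⟨s.min' hs, P.mem_part has⟩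
    have hmem : B0.max' hne ∈ s := P.le hB0 (Finset.max'_mem _ _)
    rw [Finset.mem_filter]
    refine ⟨hmem, ?_⟩
    obtain ⟨b, hb, hbne⟩ := Finset.exists_mem_ne h2 (s.min' hs)
    have h1 : s.min' hs ≤ b := s.min'_le b (P.le hB0 hb)
    have h2' : b ≤ B0.max' hne := Finset.le_max' _ b hb
    have h3 : s.min' hs ≤ B0.max' hne := s.min'_le _ hmem
    rcases Nat.lt_or_ge (s.min' hs) (B0.max' hne) with h | h
    · exact h
    · omega
  rw [card_fiber_sum _ hf]
  refine Finset.sum_congr rfl fun j hj => ?_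
  rw [Finset.mem_filter] at hj
  exact card_fiber t hs hj.1 hj.2

theorem s_card_split (hs : s.Nonempty) {j : ℕ} (hjs : j ∈ s) (haj : s.min' hs < j) :
    (s1 (s.min' hs) j s).card + (s2 j s).card + 2 = s.card := by
  have h1 : s.filter (fun x => x < j) = insert (s.min' hs) (s1 (s.min' hs) j s) := by
    ext x
    rw [Finset.mem_filter, Finset.mem_insert, mem_s1]
    constructor
    · rintro ⟨hx, hxj⟩
      rcases Nat.eq_or_lt_of_le (s.min'_le x hx) with h | h
      · exact Or.inl h.symm
      · exact Or.inr ⟨hx, h, hxj⟩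
    · rintro (h | ⟨hx, h1, h2⟩)
      · subst h; exact ⟨s.min'_mem hs, haj⟩
      · exact ⟨hx, h2⟩
  have h2 : s.filter (fun x => ¬ x < j) = insert j (s2 j s) := by
    ext x
    rw [Finset.mem_filter, Finset.mem_insert, mem_s2]
    constructor
    · rintro ⟨hx, hxj⟩
      rcases Nat.eq_or_lt_of_le (Nat.le_of_not_lt hxj) with h | h
      · exact Or.inl h.symm
      · exact Or.inr ⟨hx, h⟩
    · rintro (h | ⟨hx, h1⟩)
      · subst h; exact ⟨hjs, by omega⟩
      · exact ⟨hx, by omega⟩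
  have h3 := Finset.card_filter_add_card_filter_not (s := s) (p := fun x => x < j)
  rw [h1, h2, Finset.card_insert_of_notMem a_not_mem_s1,
    Finset.card_insert_of_notMem j_not_mem_s2] at h3
  omega

theorem sum_regions {n : ℕ} (hs : s.Nonempty) (hcard : s.card = n + 1) (G : ℕ → ℕ → ℕ) :
    ∑ j ∈ s.filter (fun x => s.min' hs < x), G (s1 (s.min' hs) j s).card (s2 j s).card
      = ∑ k ∈ Finset.range n, G k (n - 1 - k) := by
  have hfe : s.filter (fun x => s.min' hs < x) = s.erase (s.min' hs) := by
    ext x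
    rw [Finset.mem_filter, Finset.mem_erase]
    constructor
    · rintro ⟨hx, h⟩
      exact ⟨by omega, hx⟩
    · rintro ⟨hne, hx⟩
      exact ⟨hx, lt_of_le_of_ne (s.min'_le x hx) (Ne.symm hne)⟩
  have hcae : (s.erase (s.min' hs)).card = n := by
    rw [Finset.card_erase_of_mem (s.min'_mem hs), hcard]
    omega
  have hmem : ∀ j ∈ s.erase (s.min' hs), j ∈ s ∧ s.min' hs < j := by
    intro j hj
    rw [Finset.mem_erase] at hj
    exact ⟨hj.2, lt_of_le_of_ne (s.min'_le j hj.2) (Ne.symm hj.1)⟩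
  have hmono : ∀ j ∈ s.erase (s.min' hs), ∀ j' ∈ s.erase (s.min' hs), j < j' →
      (s1 (s.min' hs) j s).card < (s1 (s.min' hs) j' s).card := by
    intro j hj j' hj' hlt
    apply Finset.card_lt_card
    rw [Finset.ssubset_def]
    constructor
    · intro x hx
      rw [mem_s1] at hx ⊢
      exact ⟨hx.1, hx.2.1, by omega⟩
    · intro hsub
      have hjmem : j ∈ s1 (s.min' hs) j' s :=
        mem_s1.2 ⟨(hmem j hj).1, (hmem j hj).2, hlt⟩
      have := mem_s1.1 (hsub hjmem)
      omega
  have hinj : Set.InjOn (fun j => (s1 (s.min' hs) j s).card) (s.erase (s.min' hs)) := by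
    intro j hj j' hj' heq
    have heq' : (s1 (s.min' hs) j s).card = (s1 (s.min' hs) j' s).card := heq
    by_contra hne
    rcases Nat.lt_or_ge j j' with h | h
    · have := hmono j (by exact_mod_cast hj) j' (by exact_mod_cast hj') h
      omega
    · have hlt : j' < j := by omega
      have := hmono j' (by exact_mod_cast hj') j (by exact_mod_cast hj) hlt
      omega
  have hbound : ∀ j ∈ s.erase (s.min' hs), (s1 (s.min' hs) j s).card < n := by
    intro j hj
    have hsub : s1 (s.min' hs) j s ⊆ (s.erase (s.min' hs)).erase j := by
      intro x hx
      rw [mem_s1] at hx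
      rw [Finset.mem_erase, Finset.mem_erase]
      refine ⟨by omega, by omega, hx.1⟩
    have h1 := Finset.card_le_card hsub
    have h2 : ((s.erase (s.min' hs)).erase j).card = n - 1 := by
      rw [Finset.card_erase_of_mem hj, hcae]
    have hn : 1 ≤ n := by
      have := Finset.card_pos.2 ⟨j, hj⟩
      omega
    omega
  have himage : (s.erase (s.min' hs)).image (fun j => (s1 (s.min' hs) j s).card)
      = Finset.range n := by
    apply Finset.eq_of_subset_of_card_le
    · intro k hk
      rw [Finset.mem_image] at hk
      obtain ⟨j, hj, hjk⟩ := hk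
      rw [Finset.mem_range, ← hjk]
      exact hbound j hj
    · rw [Finset.card_range, Finset.card_image_of_injOn hinj, hcae]
  rw [hfe]
  have step1 : ∑ j ∈ s.erase (s.min' hs), G (s1 (s.min' hs) j s).card (s2 j s).card
      = ∑ j ∈ s.erase (s.min' hs),
          G (s1 (s.min' hs) j s).card (n - 1 - (s1 (s.min' hs) j s).card) := by
    refine Finset.sum_congr rfl fun j hj => ?_
    have := s_card_split hs (hmem j hj).1 (hmem j hj).2
    have h2 : (s2 j s).card = n - 1 - (s1 (s.min' hs) j s).card := by omega
    rw [h2]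
  rw [step1, ← himage, Finset.sum_image (fun j hj j' hj' h => hinj hj hj' h)]

theorem cardT_correct : ∀ n : ℕ, ∀ s : Finset ℕ, s.card = n →
    cardT false s = mo n ∧ cardT true s = p n := by
  intro n
  induction n using Nat.strong_induction_on with
  | _ n ih =>
    intro s hcard
    rcases n with _ | n
    · have : s = ∅ := Finset.card_eq_zero.1 hcard
      subst this
      rw [cardT_empty, cardT_empty]
      simp
    have hs : s.Nonempty := Finset.card_pos.1 (by omega)
    have has : s.min' hs ∈ s := s.min'_mem hs
    have hIH1 : ∀ j ∈ s.filter (fun x => s.min' hs < x),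
        cardT false (s1 (s.min' hs) j s) = mo (s1 (s.min' hs) j s).card ∧
        cardT false (s2 j s) = mo (s2 j s).card ∧
        cardT true (s2 j s) = p (s2 j s).card := by
      intro j hj
      rw [Finset.mem_filter] at hj
      have hsplit := s_card_split hs hj.1 hj.2
      have hb1 : (s1 (s.min' hs) j s).card < n + 1 := by omega
      have hb2 : (s2 j s).card < n + 1 := by omega
      exact ⟨(ih _ hb1 _ rfl).1, (ih _ hb2 _ rfl).1, (ih _ hb2 _ rfl).2⟩
    constructor
    · -- t = false
      rw [cardT, card_split (cond false) (fun P => 2 ≤ (P.part (s.min' hs)).card)]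
      have e1 : Nat.card {P : Finpartition s //
            cond false P ∧ ¬ 2 ≤ (P.part (s.min' hs)).card}
          = Nat.card {P : Finpartition s // cond false P ∧ {s.min' hs} ∈ P.parts} := by
        apply card_congr_iff
        intro P
        constructor
        · rintro ⟨hc, hcd⟩
          refine ⟨hc, ?_⟩
          have hne : (P.part (s.min' hs)).Nonempty := ⟨_, P.mem_part has⟩
          have hcard1 : (P.part (s.min' hs)).card = 1 := by
            have := Finset.card_pos.2 hne
            omega
          obtain ⟨x, hx⟩ := Finset.card_eq_one.1 hcard1
          have : s.min' hs ∈ P.part (s.min' hs) := P.mem_part has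
          rw [hx, Finset.mem_singleton] at this
          subst this
          exact hx ▸ P.part_mem.2 has
        · rintro ⟨hc, hmem⟩
          refine ⟨hc, ?_⟩
          have : P.part (s.min' hs) = {s.min' hs} :=
            P.part_eq_of_mem hmem (Finset.mem_singleton_self _)
          rw [this]
          simp
      rw [e1, card_case_one hs]
      have hce : (s.erase (s.min' hs)).card = n := by
        rw [Finset.card_erase_of_mem has, hcard]
        omega
      rw [(ih n (by omega) _ hce).1]
      rw [card_case_two false hs]
      have e2 : ∑ j ∈ s.filter (fun x => s.min' hs < x),
            cardT false (s1 (s.min' hs) j s) * cardT false (s2 j s)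
          = ∑ j ∈ s.filter (fun x => s.min' hs < x),
            mo (s1 (s.min' hs) j s).card * mo (s2 j s).card := by
        refine Finset.sum_congr rfl fun j hj => ?_
        rw [(hIH1 j hj).1, (hIH1 j hj).2.1]
      rw [e2, sum_regions hs hcard (fun k l => mo k * mo l), mo_succ]
      omega
    · -- t = true
      rw [cardT]
      have e0 : Nat.card {P : Finpartition s // cond true P}
          = Nat.card {P : Finpartition s //
              cond true P ∧ 2 ≤ (P.part (s.min' hs)).card} := by
        apply card_congr_iff
        intro P
        constructor
        · intro hc
          exact ⟨hc, hc.2.2 rfl (P.part (s.min' hs)) (P.part_mem.2 has)⟩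
        · exact fun h => h.1
      rw [e0, card_case_two true hs]
      have e2 : ∑ j ∈ s.filter (fun x => s.min' hs < x),
            cardT false (s1 (s.min' hs) j s) * cardT true (s2 j s)
          = ∑ j ∈ s.filter (fun x => s.min' hs < x),
            mo (s1 (s.min' hs) j s).card * p (s2 j s).card := by
        refine Finset.sum_congr rfl fun j hj => ?_
        rw [(hIH1 j hj).1, (hIH1 j hj).2.2]
      rw [e2, sum_regions hs hcard (fun k l => mo k * p l), p_succ]

end Fiber

section Transfer

variable {m : ℕ}

/-- push a partition of `Fin m` to a partition of `range m`. -/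
def toNat (P : Finpartition (Finset.univ : Finset (Fin m))) :
    Finpartition (Finset.range m) where
  parts := P.parts.image (fun B => B.map Fin.valEmbedding)
  supIndep := by
    rw [Finset.supIndep_iff_pairwiseDisjoint]
    intro B' hB' C' hC' hne
    show Disjoint B' C'
    simp only [Finset.coe_image, Set.mem_image, Finset.mem_coe] at hB' hC'
    obtain ⟨B, hB, rfl⟩ := hB'
    obtain ⟨C, hC, rfl⟩ := hC'
    have hBC : B ≠ C := by rintro rfl; exact hne rfl
    rw [Finset.disjoint_left]
    intro x hx hx'
    rw [Finset.mem_map] at hx hx'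
    obtain ⟨i, hi, rfl⟩ := hx
    obtain ⟨k, hk, hki⟩ := hx'
    have hik : k = i := Fin.valEmbedding.injective hki
    subst hik
    exact hBC (P.eq_of_mem_parts hB hC hi hk)
  sup_parts := by
    ext x
    rw [Finset.mem_sup, Finset.mem_range]
    constructor
    · rintro ⟨B', hB', hx⟩
      simp only [id_eq] at hx
      rw [Finset.mem_image] at hB'
      obtain ⟨B, hB, rfl⟩ := hB'
      rw [Finset.mem_map] at hx
      obtain ⟨i, hi, rfl⟩ := hx
      exact i.isLt
    · intro hx
      refine ⟨(P.part ⟨x, hx⟩).map Fin.valEmbedding, ?_, ?_⟩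
      · rw [Finset.mem_image]
        exact ⟨_, P.part_mem.2 (Finset.mem_univ _), rfl⟩
      · show x ∈ (P.part ⟨x, hx⟩).map Fin.valEmbedding
        rw [Finset.mem_map]
        exact ⟨⟨x, hx⟩, P.mem_part (Finset.mem_univ _), rfl⟩
  bot_notMem := by
    rw [Finset.bot_eq_empty, Finset.mem_image]
    rintro ⟨B, hB, hBe⟩
    rw [Finset.map_eq_empty] at hBe
    rw [hBe] at hB
    exact P.bot_notMem hB

theorem toNat_parts (P : Finpartition (Finset.univ : Finset (Fin m))) :
    (toNat P).parts = P.parts.image (fun B => B.map Fin.valEmbedding) := rfl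

theorem sb_toNat {P : Finpartition (Finset.univ : Finset (Fin m))} {i k : Fin m} :
    sb (toNat P) i.val k.val ↔ SameBlock P i k := by
  constructor
  · rintro ⟨B', hB', hi, hk⟩
    rw [toNat_parts, Finset.mem_image] at hB'
    obtain ⟨B, hB, rfl⟩ := hB'
    rw [Finset.mem_map] at hi hk
    obtain ⟨i', hi', hii⟩ := hi
    obtain ⟨k', hk', hkk⟩ := hk
    have : i' = i := Fin.val_injective hii
    subst this
    have : k' = k := Fin.val_injective hkk
    subst this
    exact ⟨B, hB, hi', hk'⟩
  · rintro ⟨B, hB, hi, hk⟩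
    refine ⟨B.map Fin.valEmbedding, ?_, ?_, ?_⟩
    · rw [toNat_parts, Finset.mem_image]
      exact ⟨B, hB, rfl⟩
    · rw [Finset.mem_map]
      exact ⟨i, hi, rfl⟩
    · rw [Finset.mem_map]
      exact ⟨k, hk, rfl⟩

theorem conds_toNat (P : Finpartition (Finset.univ : Finset (Fin m))) :
    (IsNoncrossing P ∧ NoSingletons P) ↔ cond true (toNat P) := by
  constructor
  · rintro ⟨hnc, hns⟩
    have hNS : NS (toNat P) := by
      intro B' hB'
      rw [toNat_parts, Finset.mem_image] at hB'
      obtain ⟨B, hB, rfl⟩ := hB'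
      rw [Finset.card_map]
      exact hns B hB
    refine ⟨?_, ?_, fun _ => hNS⟩
    · -- NC
      intro w x y z h1 h2 h3 hwy hxz
      have hwm : w < m := by
        obtain ⟨B', hB', hw, -⟩ := hwy
        exact Finset.mem_range.1 ((toNat P).le hB' hw)
      have hxm : x < m := by
        obtain ⟨B', hB', hx, -⟩ := hxz
        exact Finset.mem_range.1 ((toNat P).le hB' hx)
      have hym : y < m := by
        obtain ⟨B', hB', -, hy⟩ := hwy
        exact Finset.mem_range.1 ((toNat P).le hB' hy)
      have hzm : z < m := by
        obtain ⟨B', hB', -, hz⟩ := hxz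
        exact Finset.mem_range.1 ((toNat P).le hB' hz)
      have hwy' : SameBlock P ⟨w, hwm⟩ ⟨y, hym⟩ := sb_toNat.1 hwy
      have hxz' : SameBlock P ⟨x, hxm⟩ ⟨z, hzm⟩ := sb_toNat.1 hxz
      by_contra habs
      exact hnc ⟨⟨w, hwm⟩, ⟨x, hxm⟩, ⟨y, hym⟩, ⟨z, hzm⟩,
        Fin.mk_lt_mk.2 h1, Fin.mk_lt_mk.2 h2, Fin.mk_lt_mk.2 h3,
        hwy', hxz', fun hcon => habs (sb_toNat.2 hcon)⟩
    · -- EX is vacuous since no singletons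
      intro B' hB' hcard x hx C hC u hu v hv h1 h2
      have := hNS B' hB'
      omega
  · rintro ⟨hNC, hEX, hNSt⟩
    have hNS := hNSt rfl
    constructor
    · rintro ⟨a, b, c, d, h1, h2, h3, hac, hbd, hnab⟩
      have h1' : (a : ℕ) < b := h1
      have h2' : (b : ℕ) < c := h2
      have h3' : (c : ℕ) < d := h3
      exact hnab (sb_toNat.1 (hNC h1' h2' h3' (sb_toNat.2 hac) (sb_toNat.2 hbd)))
    · intro B hB
      have : B.map Fin.valEmbedding ∈ (toNat P).parts := by
        rw [toNat_parts, Finset.mem_image]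
        exact ⟨B, hB, rfl⟩
      have := hNS _ this
      rwa [Finset.card_map] at this

/-- pull a partition of `range m` back to a partition of `Fin m`. -/
def fromNat (Q : Finpartition (Finset.range m)) :
    Finpartition (Finset.univ : Finset (Fin m)) where
  parts := Q.parts.image (fun B => Finset.univ.filter (fun i : Fin m => (i : ℕ) ∈ B))
  supIndep := by
    rw [Finset.supIndep_iff_pairwiseDisjoint]
    intro B' hB' C' hC' hne
    show Disjoint B' C'
    simp only [Finset.coe_image, Set.mem_image, Finset.mem_coe] at hB' hC'
    obtain ⟨B, hB, rfl⟩ := hB'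
    obtain ⟨C, hC, rfl⟩ := hC'
    rw [Finset.disjoint_left]
    intro i hi hi'
    rw [Finset.mem_filter] at hi hi'
    exact hne (by rw [Q.eq_of_mem_parts hB hC hi.2 hi'.2])
  sup_parts := by
    ext i
    simp only [Finset.mem_univ, iff_true]
    rw [Finset.mem_sup]
    have him : (i : ℕ) ∈ Finset.range m := Finset.mem_range.2 i.isLt
    obtain ⟨B, hB, hiB⟩ := Q.exists_mem him
    refine ⟨Finset.univ.filter (fun k : Fin m => (k : ℕ) ∈ B), ?_, ?_⟩
    · rw [Finset.mem_image]
      exact ⟨B, hB, rfl⟩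
    · show i ∈ Finset.univ.filter (fun k : Fin m => (k : ℕ) ∈ B)
      rw [Finset.mem_filter]
      exact ⟨Finset.mem_univ i, hiB⟩
  bot_notMem := by
    rw [Finset.bot_eq_empty, Finset.mem_image]
    rintro ⟨B, hB, hBe⟩
    obtain ⟨x, hx⟩ := Finset.nonempty_iff_ne_empty.2 (Q.ne_bot hB)
    have hxm : x < m := Finset.mem_range.1 (Q.le hB hx)
    have : (⟨x, hxm⟩ : Fin m) ∈ Finset.univ.filter (fun i : Fin m => (i : ℕ) ∈ B) := by
      rw [Finset.mem_filter]
      exact ⟨Finset.mem_univ _, hx⟩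
    rw [hBe] at this
    simp at this

theorem toNat_fromNat (Q : Finpartition (Finset.range m)) : toNat (fromNat Q) = Q := by
  have key : ∀ B ∈ Q.parts,
      (Finset.univ.filter (fun i : Fin m => (i : ℕ) ∈ B)).map Fin.valEmbedding = B := by
    intro B hB
    ext x
    rw [Finset.mem_map]
    constructor
    · rintro ⟨i, hi, rfl⟩
      exact (Finset.mem_filter.1 hi).2
    · intro hx
      have hxm : x < m := Finset.mem_range.1 (Q.le hB hx)
      exact ⟨⟨x, hxm⟩, Finset.mem_filter.2 ⟨Finset.mem_univ _, hx⟩, rfl⟩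
  have hparts : (toNat (fromNat Q)).parts = Q.parts := by
    rw [toNat_parts, show (fromNat Q).parts
      = Q.parts.image (fun B => Finset.univ.filter (fun i : Fin m => (i : ℕ) ∈ B)) from rfl]
    rw [Finset.image_image]
    refine (Finset.image_congr fun B hB => ?_).trans Finset.image_id
    exact key B hB
  ext B
  rw [hparts]

theorem card_main (m : ℕ) :
    Nat.card {P : Finpartition (Finset.univ : Finset (Fin m)) //
        IsNoncrossing P ∧ NoSingletons P}
      = cardT true (Finset.range m) := by
  rw [cardT]
  apply Nat.card_eq_of_bijective (fun x => ⟨toNat x.1, (conds_toNat x.1).1 x.2⟩)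
  constructor
  · rintro ⟨P, hP⟩ ⟨P', hP'⟩ h
    have heq : toNat P = toNat P' := Subtype.mk_eq_mk.1 h
    have hparts : P.parts.image (fun B => B.map Fin.valEmbedding)
        = P'.parts.image (fun B => B.map Fin.valEmbedding) := by
      rw [← toNat_parts, ← toNat_parts, heq]
    have : P.parts = P'.parts :=
      Finset.image_injective (Finset.map_injective Fin.valEmbedding) hparts
    apply Subtype.ext
    ext B
    rw [this]
  · rintro ⟨Q, hQ⟩
    have hc : cond true (toNat (fromNat Q)) := by
      rw [toNat_fromNat]
      exact hQ
    exact ⟨⟨fromNat Q, (conds_toNat (fromNat Q)).2 hc⟩, Subtype.ext (toNat_fromNat Q)⟩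

end Transfer

end Chrom

theorem chromatic_algebra_dimension
    (R : ℕ → ℕ) (hR0 : R 0 = 1) (hR1 : R 1 = 0)
    (hrec : ∀ k : ℕ, 2 ≤ k → (k + 1) * R k = (k - 1) * (2 * R (k - 1) + 3 * R (k - 2)))
    (n : ℕ) (hn : 0 < n) :
    Nat.card {P : Finpartition (Finset.univ : Finset (Fin (2 * n))) //
      IsNoncrossing P ∧ NoSingletons P} = R (2 * n) := by
  rw [Chrom.card_main (2 * n)]
  have h2 := (Chrom.cardT_correct ((Finset.range (2 * n)).card) (Finset.range (2 * n)) rfl).2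
  rw [Finset.card_range] at h2
  rw [h2, Chrom.p_eq_R R hR0 hR1 hrec]
end

section
/- For every natural number m, the number of noncrossing partitions of a linearly ordered set with m elements in which every block contains at least two elements (i.e., noncrossing partitions without singletons) equals the m-th Riordan number R_m. -/
open Finset PowerSeries

def riordan : ℕ → ℕ
  | 0 => 1
  | (n+1) =>
      (∑ i : Fin n, riordan i * riordan (n - i)) +
      (∑ i : Fin n, riordan i * riordan (n - 1 - i))
  decreasing_by all_goals (have := i.isLt; omega)

@[simp] lemma riordan_zero : riordan 0 = 1 := by rw [riordan]

lemma riordan_succ (n : ℕ) : riordan (n+1) =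
    (∑ i ∈ range n, riordan i * riordan (n - i)) +
    (∑ i ∈ range n, riordan i * riordan (n - 1 - i)) := by
  rw [riordan]
  congr 1
  · exact Fin.sum_univ_eq_sum_range (fun i => riordan i * riordan (n - i)) n
  · exact Fin.sum_univ_eq_sum_range (fun i => riordan i * riordan (n - 1 - i)) n

@[simp] lemma riordan_one : riordan 1 = 0 := by simp [riordan_succ]

lemma riordan_two : riordan 2 = 1 := by simp [riordan_succ]

noncomputable def rf : PowerSeries ℚ := PowerSeries.mk fun n => (riordan n : ℚ)

@[simp] lemma coeff_rf (n : ℕ) : (coeff n) rf = (riordan n : ℚ) := coeff_mk _ _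

lemma coeff_rf_sq (n : ℕ) :
    (coeff n) (rf * rf) = ∑ i ∈ range (n+1), (riordan i : ℚ) * riordan (n - i) := by
  rw [coeff_mul, Finset.Nat.sum_antidiagonal_eq_sum_range_succ_mk]
  simp

lemma alg_eq : (1 + X) * rf = 1 + (X + X^2) * (rf * rf) := by
  ext n
  rcases n with _ | n
  · simp [rf, riordan_zero]
  · have expand : (coeff (n+1)) ((1 + X) * rf) = (riordan (n+1) : ℚ) + riordan n := by
      rw [add_mul, one_mul, map_add, coeff_rf, coeff_succ_X_mul, coeff_rf]
    rw [expand, map_add, add_mul, map_add]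
    rw [coeff_succ_X_mul, coeff_rf_sq]
    have hX2 : (coeff (n+1)) (X^2 * (rf*rf)) =
        if n = 0 then 0 else ∑ i ∈ range n, (riordan i : ℚ) * riordan (n - 1 - i) := by
      rcases n with _ | n
      · simp [pow_two, mul_assoc, coeff_succ_X_mul]
      · rw [if_neg (Nat.succ_ne_zero n)]
        rw [pow_two, mul_assoc, coeff_succ_X_mul, coeff_succ_X_mul, coeff_rf_sq]
        rfl
    rw [hX2]
    have hrec := riordan_succ n
    rcases Nat.eq_zero_or_pos n with h0 | hpos
    · subst h0; simp [riordan_succ]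
    · rw [if_neg hpos.ne']
      have h1 : (coeff (n+1)) (1 : PowerSeries ℚ) = 0 := by
        simp [coeff_one]
      rw [h1]
      have hsum : ∑ i ∈ range (n+1), (riordan i : ℚ) * riordan (n - i)
          = (∑ i ∈ range n, (riordan i : ℚ) * riordan (n - i)) + riordan n := by
        rw [Finset.sum_range_succ]; simp
      rw [hsum]
      push_cast [hrec]
      ring

example : True := trivial

noncomputable abbrev drf : PowerSeries ℚ := PowerSeries.derivative ℚ rf

lemma rf_eq_zero_aux : X*(1+X)*rf^2 - (1+X)*rf + 1 = 0 := by
  have h := alg_eq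
  have : X*(1+X)*rf^2 = (X + X^2) * (rf * rf) := by ring
  rw [this, h]; ring

lemma d_alg_eq_zero : (PowerSeries.derivative ℚ) (X*(1+X)*rf^2 - (1+X)*rf + 1) = 0 := by
  rw [rf_eq_zero_aux]; simp

lemma d_alg_expand : (PowerSeries.derivative ℚ) (X*(1+X)*rf^2 - (1+X)*rf + 1)
    = (1+2*X)*rf^2 + 2*X*(1+X)*rf*drf - rf - (1+X)*drf := by
  have h1 : X*(1+X)*rf^2 - (1+X)*rf + 1
      = X*(rf*rf) + (X*X)*(rf*rf) - rf - X*rf + 1 := by ring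
  rw [h1]
  simp only [map_add, map_sub, Derivation.leibniz, Derivation.map_one_eq_zero,
    PowerSeries.derivative_X, smul_eq_mul]
  ring

lemma D_eq_zero : X*(1-2*X-3*X^2) * drf + (1 - 3*X^2)*rf - 1 = 0 := by
  have hA := rf_eq_zero_aux
  have hdA := d_alg_eq_zero
  rw [d_alg_expand] at hdA
  have hAf : constantCoeff (2*X*(1+X)*rf - (1+X)) = -1 := by
    simp [rf]
  have key : (2*X*(1+X)*rf - (1+X)) * (X*(1-2*X-3*X^2) * drf + (1 - 3*X^2)*rf - 1)
      = X*(1-2*X-3*X^2) * ((1+2*X)*rf^2 + 2*X*(1+X)*rf*drf - rf - (1+X)*drf)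
        + (1+X) * (X*(1+X)*rf^2 - (1+X)*rf + 1) := by ring
  rw [hdA, hA, mul_zero, mul_zero, add_zero] at key
  rcases mul_eq_zero.mp key with h | h
  · exfalso
    have := congrArg constantCoeff h
    rw [hAf] at this
    simpa using this
  · exact h

lemma riordan_holonomic_rat (n : ℕ) :
    ((n+4 : ℕ) : ℚ) * riordan (n+3) = 2*((n+2:ℕ):ℚ) * riordan (n+2) + 3*((n+2:ℕ):ℚ) * riordan (n+1) := by
  have h := D_eq_zero
  have h2 := congrArg (coeff (n+3)) h
  have hC2 : (C (2:ℚ) : PowerSeries ℚ) = 2 := map_ofNat _ 2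
  have hC3 : (C (3:ℚ) : PowerSeries ℚ) = 3 := map_ofNat _ 3
  have e1 : X*(1-2*X-3*X^2) * drf + (1 - 3*X^2)*rf - 1
      = X*drf - X*(X*((C 2) * drf)) - X*(X*(X*((C 3) * drf))) + rf - X*(X*((C 3) * rf)) - 1 := by
    rw [hC2, hC3]
    ring
  rw [e1] at h2
  simp only [map_sub, map_add] at h2
  rw [show (n+3) = (n+2)+1 from rfl, coeff_succ_X_mul] at h2
  rw [coeff_succ_X_mul, coeff_succ_X_mul, coeff_succ_X_mul, coeff_succ_X_mul,
    coeff_succ_X_mul, coeff_succ_X_mul, coeff_succ_X_mul] at h2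
  rw [coeff_C_mul, coeff_C_mul, coeff_C_mul] at h2
  simp only [map_zero] at h2
  rw [PowerSeries.coeff_derivative, PowerSeries.coeff_derivative, PowerSeries.coeff_derivative] at h2
  simp only [coeff_rf, map_one, coeff_one] at h2
  push_cast at h2 ⊢
  linarith [h2]

lemma riordan_holonomic (k : ℕ) (hk : 2 ≤ k) :
    (k + 1) * riordan k = (k - 1) * (2 * riordan (k - 1) + 3 * riordan (k - 2)) := by
  match k, hk with
  | 2, _ => norm_num [riordan_two]
  | (n+3), _ =>
    have h := riordan_holonomic_rat n
    have : ((n+4) * riordan (n+3) : ℚ) = ((n+2) * (2 * riordan (n+2) + 3 * riordan (n+1)) : ℚ) := by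
      push_cast
      push_cast at h
      linarith
    have hnat : (n+4) * riordan (n+3) = (n+2) * (2 * riordan (n+2) + 3 * riordan (n+1)) := by
      exact_mod_cast this
    simpa [Nat.succ_sub_one] using hnat

lemma riordan_unique (R : ℕ → ℕ) (hR0 : R 0 = 1) (hR1 : R 1 = 0)
    (hrec : ∀ k : ℕ, 2 ≤ k → (k + 1) * R k = (k - 1) * (2 * R (k - 1) + 3 * R (k - 2))) :
    ∀ m, R m = riordan m := by
  intro m
  induction m using Nat.strong_induction_on with
  | _ m ih =>
    match m with
    | 0 => simpa using hR0
    | 1 => simpa using hR1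
    | (n+2) =>
      have h1 := hrec (n+2) (by omega)
      have h2 := riordan_holonomic (n+2) (by omega)
      have e : n+2-1 = n+1 := rfl
      have e2 : n+2-2 = n := rfl
      rw [e, e2] at h1 h2
      rw [ih (n+1) (by omega), ih n (by omega)] at h1
      have : (n+2+1) * R (n+2) = (n+2+1) * riordan (n+2) := by
        rw [h1]
        rw [← h2]
      exact Nat.eq_of_mul_eq_mul_left (by omega) this



def NCRel {m : ℕ} (r : Fin m → Fin m → Prop) : Prop :=
  ¬ ∃ a b c d : Fin m, a < b ∧ b < c ∧ c < d ∧ r a c ∧ r b d ∧ ¬ r a b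

def NoSingRel {m : ℕ} (r : Fin m → Fin m → Prop) : Prop :=
  ∀ a, ∃ b, b ≠ a ∧ r a b

def GoodRel (m : ℕ) := {r : Fin m → Fin m → Prop // Equivalence r ∧ NCRel r ∧ NoSingRel r}

instance (m : ℕ) : Finite (GoodRel m) := Subtype.finite

/-- Lift a relation on `Fin k` to `ℕ`. -/
def liftR {k : ℕ} (r : Fin k → Fin k → Prop) (x y : ℕ) : Prop :=
  ∃ (hx : x < k) (hy : y < k), r ⟨x, hx⟩ ⟨y, hy⟩

lemma liftR_refl {k : ℕ} {r : Fin k → Fin k → Prop} (h : Equivalence r) {x : ℕ}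
    (hx : x < k) : liftR r x x := ⟨hx, hx, h.refl _⟩

lemma liftR_symm {k : ℕ} {r : Fin k → Fin k → Prop} (h : Equivalence r) {x y : ℕ}
    (hxy : liftR r x y) : liftR r y x := by
  obtain ⟨hx, hy, hr⟩ := hxy
  exact ⟨hy, hx, h.symm hr⟩

lemma liftR_trans {k : ℕ} {r : Fin k → Fin k → Prop} (h : Equivalence r) {x y z : ℕ}
    (h1 : liftR r x y) (h2 : liftR r y z) : liftR r x z := by
  obtain ⟨hx, hy, hr⟩ := h1
  obtain ⟨hy', hz, hr'⟩ := h2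
  exact ⟨hx, hz, h.trans hr hr'⟩

lemma liftR_self {k : ℕ} {r : Fin k → Fin k → Prop} (a b : Fin k) :
    liftR r a.1 b.1 ↔ r a b := by
  constructor
  · rintro ⟨hx, hy, hr⟩
    convert hr <;> exact (Fin.ext rfl)
  · intro h
    exact ⟨a.isLt, b.isLt, by convert h <;> exact (Fin.ext rfl)⟩

lemma liftR_of {k : ℕ} {r : Fin k → Fin k → Prop} {a b : Fin k} (h : r a b) {x y : ℕ}
    (hx : x = a.1) (hy : y = b.1) : liftR r x y := by
  subst hx; subst hy; exact ⟨a.isLt, b.isLt, h⟩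

section Glue

variable {n : ℕ}

/-- Glue for the case where the block of `0` is exactly `{0, i+1}`:
`r₁` lives on positions `1..i` (size `i`), `r₂` on positions `i+2..n` (size `n-1-i`). -/
def pairGlue (i : Fin n) (r₁ : Fin i.1 → Fin i.1 → Prop)
    (r₂ : Fin (n-1-i.1) → Fin (n-1-i.1) → Prop) (a b : Fin (n+1)) : Prop :=
  ((a.1 = 0 ∨ a.1 = i.1+1) ∧ (b.1 = 0 ∨ b.1 = i.1+1)) ∨
  (0 < a.1 ∧ a.1 < i.1+1 ∧ 0 < b.1 ∧ b.1 < i.1+1 ∧ liftR r₁ (a.1-1) (b.1-1)) ∨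
  (i.1+1 < a.1 ∧ i.1+1 < b.1 ∧ liftR r₂ (a.1-i.1-2) (b.1-i.1-2))

/-- Glue for the case where the block of `0` has at least two nonzero elements:
`r₁` lives on positions `1..i` (size `i`), `r₂` on positions `{0} ∪ [i+1..n]`
(identifying `0` with `i+1`; size `n-i`). -/
def bigGlue (i : Fin n) (r₁ : Fin i.1 → Fin i.1 → Prop)
    (r₂ : Fin (n-i.1) → Fin (n-i.1) → Prop) (a b : Fin (n+1)) : Prop :=
  (0 < a.1 ∧ a.1 < i.1+1 ∧ 0 < b.1 ∧ b.1 < i.1+1 ∧ liftR r₁ (a.1-1) (b.1-1)) ∨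
  ((a.1 = 0 ∨ i.1+1 ≤ a.1) ∧ (b.1 = 0 ∨ i.1+1 ≤ b.1) ∧ liftR r₂ (a.1-(i.1+1)) (b.1-(i.1+1)))

lemma pairGlue_equivalence (i : Fin n) {r₁ : Fin i.1 → Fin i.1 → Prop}
    {r₂ : Fin (n-1-i.1) → Fin (n-1-i.1) → Prop}
    (h1 : Equivalence r₁) (h2 : Equivalence r₂) : Equivalence (pairGlue i r₁ r₂) := by
  have hi := i.isLt
  constructor
  · intro a
    have ha := a.isLt
    rcases Nat.lt_or_ge a.1 (i.1+2) with h | h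
    · rcases Nat.eq_zero_or_pos a.1 with h0 | h0
      · exact Or.inl ⟨Or.inl h0, Or.inl h0⟩
      · rcases Nat.lt_or_ge a.1 (i.1+1) with hm | hm
        · exact Or.inr (Or.inl ⟨h0, hm, h0, hm, liftR_refl h1 (by omega)⟩)
        · have : a.1 = i.1+1 := by omega
          exact Or.inl ⟨Or.inr this, Or.inr this⟩
    · exact Or.inr (Or.inr ⟨by omega, by omega, liftR_refl h2 (by omega)⟩)
  · rintro a b (⟨u, v⟩ | ⟨u1, u2, u3, u4, u5⟩ | ⟨u1, u2, u3⟩)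
    · exact Or.inl ⟨v, u⟩
    · exact Or.inr (Or.inl ⟨u3, u4, u1, u2, liftR_symm h1 u5⟩)
    · exact Or.inr (Or.inr ⟨u2, u1, liftR_symm h2 u3⟩)
  · rintro a b c (⟨u, v⟩ | ⟨u1, u2, u3, u4, u5⟩ | ⟨u1, u2, u3⟩) hbc <;>
      rcases hbc with (⟨w, x⟩ | ⟨w1, w2, w3, w4, w5⟩ | ⟨w1, w2, w3⟩)
    · exact Or.inl ⟨u, x⟩
    · exfalso; omega
    · exfalso; omega
    · exfalso; omega
    · exact Or.inr (Or.inl ⟨u1, u2, w3, w4, liftR_trans h1 u5 w5⟩)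
    · exfalso; omega
    · exfalso; omega
    · exfalso; omega
    · exact Or.inr (Or.inr ⟨u1, w2, liftR_trans h2 u3 w3⟩)

lemma bigGlue_equivalence (i : Fin n) {r₁ : Fin i.1 → Fin i.1 → Prop}
    {r₂ : Fin (n-i.1) → Fin (n-i.1) → Prop}
    (h1 : Equivalence r₁) (h2 : Equivalence r₂) : Equivalence (bigGlue i r₁ r₂) := by
  have hi := i.isLt
  constructor
  · intro a
    have ha := a.isLt
    rcases Nat.eq_zero_or_pos a.1 with h0 | h0
    · exact Or.inr ⟨Or.inl h0, Or.inl h0, liftR_refl h2 (by omega)⟩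
    · rcases Nat.lt_or_ge a.1 (i.1+1) with hm | hm
      · exact Or.inl ⟨h0, hm, h0, hm, liftR_refl h1 (by omega)⟩
      · exact Or.inr ⟨Or.inr hm, Or.inr hm, liftR_refl h2 (by omega)⟩
  · rintro a b (⟨u1, u2, u3, u4, u5⟩ | ⟨u1, u2, u3⟩)
    · exact Or.inl ⟨u3, u4, u1, u2, liftR_symm h1 u5⟩
    · exact Or.inr ⟨u2, u1, liftR_symm h2 u3⟩
  · rintro a b c (⟨u1, u2, u3, u4, u5⟩ | ⟨u1, u2, u3⟩) (⟨w1, w2, w3, w4, w5⟩ | ⟨w1, w2, w3⟩)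
    · exact Or.inl ⟨u1, u2, w3, w4, liftR_trans h1 u5 w5⟩
    · exfalso; omega
    · exfalso; omega
    · exact Or.inr ⟨u1, w2, liftR_trans h2 u3 w3⟩

end Glue

section Bridge

attribute [local instance] Classical.propDecidable

variable {m : ℕ}

lemma sameBlock_iff_mem_part (P : Finpartition (Finset.univ : Finset (Fin m))) (a b : Fin m) :
    SameBlock P a b ↔ b ∈ P.part a := by
  constructor
  · rintro ⟨B, hB, haB, hbB⟩
    rwa [P.part_eq_of_mem hB haB]
  · intro hb
    exact ⟨P.part a, P.part_mem.2 (mem_univ a), P.mem_part (mem_univ a), hb⟩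

lemma sameBlock_equivalence (P : Finpartition (Finset.univ : Finset (Fin m))) :
    Equivalence (SameBlock P) := by
  constructor
  · intro a
    obtain ⟨B, hB, haB⟩ := P.exists_mem (mem_univ a)
    exact ⟨B, hB, haB, haB⟩
  · rintro a b ⟨B, hB, h1, h2⟩; exact ⟨B, hB, h2, h1⟩
  · rintro a b c ⟨B, hB, h1, h2⟩ ⟨B', hB', h1', h2'⟩
    rw [P.eq_of_mem_parts hB' hB h1' h2] at h2'
    exact ⟨B, hB, h1, h2'⟩

lemma sameBlock_noSing {P : Finpartition (Finset.univ : Finset (Fin m))}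
    (h : NoSingletons P) : NoSingRel (SameBlock P) := by
  intro a
  obtain ⟨B, hB, haB⟩ := P.exists_mem (mem_univ a)
  obtain ⟨b, hbB, hba⟩ := Finset.exists_mem_ne (s := B) (by have := h B hB; omega) a
  exact ⟨b, hba, B, hB, haB, hbB⟩

/-- The Finpartition attached to a good relation. -/
noncomputable def toPartition (r : GoodRel m) : Finpartition (Finset.univ : Finset (Fin m)) :=
  Finpartition.ofSetoid (Setoid.mk r.1 r.2.1)

lemma sameBlock_toPartition (r : GoodRel m) (a b : Fin m) :
    SameBlock (toPartition r) a b ↔ r.1 a b := by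
  rw [sameBlock_iff_mem_part, toPartition]
  exact Finpartition.mem_part_ofSetoid_iff_rel

lemma finpartition_eq_of_sameBlock {P Q : Finpartition (Finset.univ : Finset (Fin m))}
    (h : ∀ a b, SameBlock P a b ↔ SameBlock Q a b) : P = Q := by
  have key : ∀ (P' Q' : Finpartition (Finset.univ : Finset (Fin m))),
      (∀ a b, SameBlock P' a b ↔ SameBlock Q' a b) → P'.parts ⊆ Q'.parts := by
    intro P' Q' h' B hB
    obtain ⟨a, haB⟩ := P'.nonempty_of_mem_parts hB
    have : B = Q'.part a := by
      ext x
      rw [← P'.part_eq_of_mem hB haB, ← sameBlock_iff_mem_part, ← sameBlock_iff_mem_part]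
      exact h' a x
    rw [this]
    exact Q'.part_mem.2 (mem_univ a)
  ext B
  · exact ⟨fun hB => key P Q h hB, fun hB => key Q P (fun a b => (h a b).symm) hB⟩

noncomputable def bridgeEquiv (m : ℕ) :
    {P : Finpartition (Finset.univ : Finset (Fin m)) // IsNoncrossing P ∧ NoSingletons P} ≃
    GoodRel m where
  toFun P := ⟨SameBlock P.1, sameBlock_equivalence P.1, P.2.1, sameBlock_noSing P.2.2⟩
  invFun r := ⟨toPartition r, by
    constructor
    · intro ⟨a, b, c, d, h1, h2, h3, h4, h5, h6⟩
      rw [sameBlock_toPartition] at h4 h5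
      rw [show (¬ SameBlock (toPartition r) a b) ↔ ¬ r.1 a b by
        rw [sameBlock_toPartition]] at h6
      exact r.2.2.1 ⟨a, b, c, d, h1, h2, h3, h4, h5, h6⟩
    · intro B hB
      obtain ⟨a, haB⟩ := (toPartition r).nonempty_of_mem_parts hB
      obtain ⟨b, hba, hab⟩ := r.2.2.2 a
      have hbB : b ∈ B := by
        rw [← (toPartition r).part_eq_of_mem hB haB, ← sameBlock_iff_mem_part,
          sameBlock_toPartition]
        exact hab
      exact Finset.one_lt_card.mpr ⟨a, haB, b, hbB, fun e => hba e.symm⟩⟩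
  left_inv P := by
    apply Subtype.ext
    exact finpartition_eq_of_sameBlock (fun a b => sameBlock_toPartition _ a b)
  right_inv r := by
    apply Subtype.ext
    funext a b
    exact propext (sameBlock_toPartition r a b)

instance (m : ℕ) :
    Finite {P : Finpartition (Finset.univ : Finset (Fin m)) // IsNoncrossing P ∧ NoSingletons P} :=
  Finite.of_equiv _ (bridgeEquiv m).symm

lemma card_bridge (m : ℕ) :
    Nat.card {P : Finpartition (Finset.univ : Finset (Fin m)) //
      IsNoncrossing P ∧ NoSingletons P} = Nat.card (GoodRel m) :=
  Nat.card_congr (bridgeEquiv m)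

end Bridge

section Glue2

variable {n : ℕ}

lemma pairGlue_NC (i : Fin n) {r₁ : Fin i.1 → Fin i.1 → Prop}
    {r₂ : Fin (n-1-i.1) → Fin (n-1-i.1) → Prop}
    (h1 : NCRel r₁) (h2 : NCRel r₂) : NCRel (pairGlue i r₁ r₂) := by
  rintro ⟨a, b, c, d, hab, hbc, hcd, hac, hbd, hnab⟩
  rw [Fin.lt_def] at hab hbc hcd
  have hi := i.isLt
  have hd := d.isLt
  rcases hac with (⟨u, v⟩ | ⟨u1, u2, u3, u4, u5⟩ | ⟨u1, u2, u3⟩) <;>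
    rcases hbd with (⟨w, x⟩ | ⟨w1, w2, w3, w4, w5⟩ | ⟨w1, w2, w3⟩)
  · omega
  · omega
  · omega
  · omega
  · -- mid/mid
    obtain ⟨pa, pc, hrac⟩ := u5
    obtain ⟨pb, pd, hrbd⟩ := w5
    refine h1 ⟨⟨a.1-1, pa⟩, ⟨b.1-1, pb⟩, ⟨c.1-1, pc⟩, ⟨d.1-1, pd⟩,
      Fin.mk_lt_mk.mpr (by omega), Fin.mk_lt_mk.mpr (by omega), Fin.mk_lt_mk.mpr (by omega),
      hrac, hrbd, ?_⟩
    intro hh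
    exact hnab (Or.inr (Or.inl ⟨u1, u2, w1, w2, ⟨pa, pb, hh⟩⟩))
  · omega
  · omega
  · omega
  · -- out/out
    obtain ⟨pa, pc, hrac⟩ := u3
    obtain ⟨pb, pd, hrbd⟩ := w3
    refine h2 ⟨⟨a.1-i.1-2, pa⟩, ⟨b.1-i.1-2, pb⟩, ⟨c.1-i.1-2, pc⟩, ⟨d.1-i.1-2, pd⟩,
      Fin.mk_lt_mk.mpr (by omega), Fin.mk_lt_mk.mpr (by omega), Fin.mk_lt_mk.mpr (by omega),
      hrac, hrbd, ?_⟩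
    intro hh
    exact hnab (Or.inr (Or.inr ⟨u1, w1, ⟨pa, pb, hh⟩⟩))

lemma bigGlue_NC (i : Fin n) {r₁ : Fin i.1 → Fin i.1 → Prop}
    {r₂ : Fin (n-i.1) → Fin (n-i.1) → Prop} (h2e : Equivalence r₂)
    (h1 : NCRel r₁) (h2 : NCRel r₂) : NCRel (bigGlue i r₁ r₂) := by
  rintro ⟨a, b, c, d, hab, hbc, hcd, hac, hbd, hnab⟩
  rw [Fin.lt_def] at hab hbc hcd
  have hi := i.isLt
  have hd := d.isLt
  rcases hac with (⟨u1, u2, u3, u4, u5⟩ | ⟨u1, u2, u3⟩) <;>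
    rcases hbd with (⟨w1, w2, w3, w4, w5⟩ | ⟨w1, w2, w3⟩)
  · -- mid/mid
    obtain ⟨pa, pc, hrac⟩ := u5
    obtain ⟨pb, pd, hrbd⟩ := w5
    refine h1 ⟨⟨a.1-1, pa⟩, ⟨b.1-1, pb⟩, ⟨c.1-1, pc⟩, ⟨d.1-1, pd⟩,
      Fin.mk_lt_mk.mpr (by omega), Fin.mk_lt_mk.mpr (by omega), Fin.mk_lt_mk.mpr (by omega),
      hrac, hrbd, ?_⟩
    intro hh
    exact hnab (Or.inl ⟨u1, u2, w1, w2, ⟨pa, pb, hh⟩⟩)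
  · omega
  · omega
  · -- outer/outer
    obtain ⟨pa, pc, hrac⟩ := u3
    obtain ⟨pb, pd, hrbd⟩ := w3
    have hane : ¬ (a.1 = 0 ∧ b.1 = i.1+1) := by
      rintro ⟨ha0, hbj⟩
      refine hnab (Or.inr ⟨Or.inl ha0, Or.inr (by omega), ?_⟩)
      rw [ha0, hbj]
      simpa using liftR_refl h2e (show i.1+1-(i.1+1) < n - i.1 by omega)
    refine h2 ⟨⟨a.1-(i.1+1), pa⟩, ⟨b.1-(i.1+1), pb⟩, ⟨c.1-(i.1+1), pc⟩, ⟨d.1-(i.1+1), pd⟩,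
      Fin.mk_lt_mk.mpr (by omega), Fin.mk_lt_mk.mpr (by omega), Fin.mk_lt_mk.mpr (by omega),
      hrac, hrbd, ?_⟩
    intro hh
    exact hnab (Or.inr ⟨u1, w1, ⟨pa, pb, hh⟩⟩)

lemma pairGlue_noSing (i : Fin n) {r₁ : Fin i.1 → Fin i.1 → Prop}
    {r₂ : Fin (n-1-i.1) → Fin (n-1-i.1) → Prop}
    (h1 : NoSingRel r₁) (h2 : NoSingRel r₂) : NoSingRel (pairGlue i r₁ r₂) := by
  intro a
  have hi := i.isLt
  have ha := a.isLt
  rcases Nat.eq_zero_or_pos a.1 with h0 | h0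
  · exact ⟨⟨i.1+1, by omega⟩, Fin.ne_of_val_ne (show i.1+1 ≠ a.1 by omega),
      Or.inl ⟨Or.inl h0, Or.inr rfl⟩⟩
  · rcases Nat.lt_or_ge a.1 (i.1+1) with hm | hm
    · obtain ⟨b, hb, hrb⟩ := h1 ⟨a.1-1, by omega⟩
      have hbv : b.1 ≠ a.1-1 := fun hh => hb (Fin.ext hh)
      have hblt := b.isLt
      exact ⟨⟨b.1+1, by omega⟩, Fin.ne_of_val_ne (show b.1+1 ≠ a.1 by omega),
        Or.inr (Or.inl ⟨h0, hm, show 0 < b.1+1 by omega, show b.1+1 < i.1+1 by omega,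
          liftR_of hrb rfl (show b.1+1-1 = b.1 by omega)⟩)⟩
    · rcases Nat.eq_or_lt_of_le hm with he | hgt
      · exact ⟨⟨0, by omega⟩, Fin.ne_of_val_ne (show 0 ≠ a.1 by omega),
          Or.inl ⟨Or.inr he.symm, Or.inl rfl⟩⟩
      · obtain ⟨b, hb, hrb⟩ := h2 ⟨a.1-i.1-2, by omega⟩
        have hbv : b.1 ≠ a.1-i.1-2 := fun hh => hb (Fin.ext hh)
        have hblt := b.isLt
        exact ⟨⟨b.1+i.1+2, by omega⟩, Fin.ne_of_val_ne (show b.1+i.1+2 ≠ a.1 by omega),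
          Or.inr (Or.inr ⟨hgt, show i.1+1 < b.1+i.1+2 by omega,
            liftR_of hrb rfl (show b.1+i.1+2-i.1-2 = b.1 by omega)⟩)⟩

lemma bigGlue_noSing (i : Fin n) {r₁ : Fin i.1 → Fin i.1 → Prop}
    {r₂ : Fin (n-i.1) → Fin (n-i.1) → Prop}
    (h1 : NoSingRel r₁) (h2 : NoSingRel r₂) : NoSingRel (bigGlue i r₁ r₂) := by
  intro a
  have hi := i.isLt
  have ha := a.isLt
  rcases Nat.eq_zero_or_pos a.1 with h0 | h0
  · obtain ⟨b, hb, hrb⟩ := h2 ⟨0, by omega⟩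
    have hbv : b.1 ≠ 0 := fun hh => hb (Fin.ext hh)
    have hblt := b.isLt
    exact ⟨⟨b.1+(i.1+1), by omega⟩, Fin.ne_of_val_ne (show b.1+(i.1+1) ≠ a.1 by omega),
      Or.inr ⟨Or.inl h0, Or.inr (show i.1+1 ≤ b.1+(i.1+1) by omega),
        liftR_of hrb (show a.1-(i.1+1) = 0 by omega) (show b.1+(i.1+1)-(i.1+1) = b.1 by omega)⟩⟩
  · rcases Nat.lt_or_ge a.1 (i.1+1) with hm | hm
    · obtain ⟨b, hb, hrb⟩ := h1 ⟨a.1-1, by omega⟩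
      have hbv : b.1 ≠ a.1-1 := fun hh => hb (Fin.ext hh)
      have hblt := b.isLt
      exact ⟨⟨b.1+1, by omega⟩, Fin.ne_of_val_ne (show b.1+1 ≠ a.1 by omega),
        Or.inl ⟨h0, hm, show 0 < b.1+1 by omega, show b.1+1 < i.1+1 by omega,
          liftR_of hrb rfl (show b.1+1-1 = b.1 by omega)⟩⟩
    · obtain ⟨b, hb, hrb⟩ := h2 ⟨a.1-(i.1+1), by omega⟩
      have hbv : b.1 ≠ a.1-(i.1+1) := fun hh => hb (Fin.ext hh)
      have hblt := b.isLt
      exact ⟨⟨b.1+(i.1+1), by omega⟩, Fin.ne_of_val_ne (show b.1+(i.1+1) ≠ a.1 by omega),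
        Or.inr ⟨Or.inr hm, Or.inr (show i.1+1 ≤ b.1+(i.1+1) by omega),
          liftR_of hrb rfl (show b.1+(i.1+1)-(i.1+1) = b.1 by omega)⟩⟩

end Glue2
section Glue3

variable {n : ℕ}

lemma rel_cast {m : ℕ} {r : Fin m → Fin m → Prop} {x y x' y' : Fin m} (h : r x y)
    (hx : x.1 = x'.1) (hy : y.1 = y'.1) : r x' y' := by
  rw [show x' = x from Fin.ext hx.symm, show y' = y from Fin.ext hy.symm]
  exact h

lemma pairGlue_eval_mid (i : Fin n) (r₁ : Fin i.1 → Fin i.1 → Prop)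
    (r₂ : Fin (n-1-i.1) → Fin (n-1-i.1) → Prop) (u v : Fin (n+1)) (a b : Fin i.1)
    (hu : u.1 = a.1+1) (hv : v.1 = b.1+1) :
    pairGlue i r₁ r₂ u v ↔ r₁ a b := by
  have ha := a.isLt
  have hb := b.isLt
  have hi := i.isLt
  constructor
  · rintro (⟨p, q⟩ | ⟨u1, u2, u3, u4, u5⟩ | ⟨u1, u2, u3⟩)
    · exfalso; omega
    · obtain ⟨p, q, h⟩ := u5
      exact rel_cast h (show u.1-1 = a.1 by omega) (show v.1-1 = b.1 by omega)
    · exfalso; omega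
  · intro h
    exact Or.inr (Or.inl ⟨by omega, by omega, by omega, by omega,
      liftR_of h (by omega) (by omega)⟩)

lemma pairGlue_eval_out (i : Fin n) (r₁ : Fin i.1 → Fin i.1 → Prop)
    (r₂ : Fin (n-1-i.1) → Fin (n-1-i.1) → Prop) (u v : Fin (n+1)) (a b : Fin (n-1-i.1))
    (hu : u.1 = a.1+i.1+2) (hv : v.1 = b.1+i.1+2) :
    pairGlue i r₁ r₂ u v ↔ r₂ a b := by
  have ha := a.isLt
  have hb := b.isLt
  have hi := i.isLt
  constructor
  · rintro (⟨p, q⟩ | ⟨u1, u2, u3, u4, u5⟩ | ⟨u1, u2, u3⟩)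
    · exfalso; omega
    · exfalso; omega
    · obtain ⟨p, q, h⟩ := u3
      exact rel_cast h (show u.1-i.1-2 = a.1 by omega) (show v.1-i.1-2 = b.1 by omega)
  · intro h
    exact Or.inr (Or.inr ⟨by omega, by omega, liftR_of h (by omega) (by omega)⟩)

lemma bigGlue_eval_mid (i : Fin n) (r₁ : Fin i.1 → Fin i.1 → Prop)
    (r₂ : Fin (n-i.1) → Fin (n-i.1) → Prop) (u v : Fin (n+1)) (a b : Fin i.1)
    (hu : u.1 = a.1+1) (hv : v.1 = b.1+1) :
    bigGlue i r₁ r₂ u v ↔ r₁ a b := by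
  have ha := a.isLt
  have hb := b.isLt
  have hi := i.isLt
  constructor
  · rintro (⟨u1, u2, u3, u4, u5⟩ | ⟨u1, u2, u3⟩)
    · obtain ⟨p, q, h⟩ := u5
      exact rel_cast h (show u.1-1 = a.1 by omega) (show v.1-1 = b.1 by omega)
    · exfalso; rcases u1 with h' | h' <;> omega
  · intro h
    exact Or.inl ⟨by omega, by omega, by omega, by omega, liftR_of h (by omega) (by omega)⟩

lemma bigGlue_eval_out (i : Fin n) (r₁ : Fin i.1 → Fin i.1 → Prop)
    (r₂ : Fin (n-i.1) → Fin (n-i.1) → Prop) (u v : Fin (n+1)) (a b : Fin (n-i.1))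
    (hu : u.1 = a.1+(i.1+1)) (hv : v.1 = b.1+(i.1+1)) :
    bigGlue i r₁ r₂ u v ↔ r₂ a b := by
  have ha := a.isLt
  have hb := b.isLt
  have hi := i.isLt
  constructor
  · rintro (⟨u1, u2, u3, u4, u5⟩ | ⟨u1, u2, u3⟩)
    · exfalso; omega
    · obtain ⟨p, q, h⟩ := u3
      exact rel_cast h (show u.1-(i.1+1) = a.1 by omega) (show v.1-(i.1+1) = b.1 by omega)
  · intro h
    exact Or.inr ⟨Or.inr (by omega), Or.inr (by omega), liftR_of h (by omega) (by omega)⟩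

lemma pairGlue_zero_mem (i : Fin n) {r₁ : Fin i.1 → Fin i.1 → Prop}
    {r₂ : Fin (n-1-i.1) → Fin (n-1-i.1) → Prop} {z x : Fin (n+1)} (hz : z.1 = 0)
    (h : pairGlue i r₁ r₂ z x) : x.1 = 0 ∨ x.1 = i.1+1 := by
  rcases h with (⟨u, v⟩ | ⟨u1, _⟩ | ⟨u1, _⟩)
  · exact v
  · exact absurd u1 (by omega)
  · exact absurd u1 (by omega)

lemma bigGlue_zero_mem (i : Fin n) {r₁ : Fin i.1 → Fin i.1 → Prop}
    {r₂ : Fin (n-i.1) → Fin (n-i.1) → Prop} {z x : Fin (n+1)} (hz : z.1 = 0)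
    (h : bigGlue i r₁ r₂ z x) : x.1 = 0 ∨ i.1+1 ≤ x.1 := by
  rcases h with (⟨u1, _⟩ | ⟨_, v, _⟩)
  · exact absurd u1 (by omega)
  · exact v

lemma pairGlue_zero_top (i : Fin n) (r₁ : Fin i.1 → Fin i.1 → Prop)
    (r₂ : Fin (n-1-i.1) → Fin (n-1-i.1) → Prop) {z x : Fin (n+1)} (hz : z.1 = 0)
    (hx : x.1 = i.1+1) : pairGlue i r₁ r₂ z x :=
  Or.inl ⟨Or.inl hz, Or.inr hx⟩

lemma bigGlue_zero_top (i : Fin n) (r₁ : Fin i.1 → Fin i.1 → Prop)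
    {r₂ : Fin (n-i.1) → Fin (n-i.1) → Prop} (h2e : Equivalence r₂) {z x : Fin (n+1)}
    (hz : z.1 = 0) (hx : x.1 = i.1+1) : bigGlue i r₁ r₂ z x := by
  have hi := i.isLt
  exact Or.inr ⟨Or.inl hz, Or.inr (by omega),
    liftR_of (h2e.refl ⟨0, by omega⟩) (show z.1-(i.1+1) = 0 by omega)
      (show x.1-(i.1+1) = 0 by omega)⟩

lemma bigGlue_zero_big (i : Fin n) (r₁ : Fin i.1 → Fin i.1 → Prop)
    {r₂ : Fin (n-i.1) → Fin (n-i.1) → Prop} (h2 : NoSingRel r₂) {z : Fin (n+1)} (hz : z.1 = 0) :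
    ∃ x : Fin (n+1), bigGlue i r₁ r₂ z x ∧ i.1+1 < x.1 := by
  have hi := i.isLt
  obtain ⟨b, hb, hrb⟩ := h2 ⟨0, by omega⟩
  have hbv : b.1 ≠ 0 := fun hh => hb (Fin.ext hh)
  have hblt := b.isLt
  refine ⟨⟨b.1+(i.1+1), by omega⟩, Or.inr ⟨Or.inl hz,
    Or.inr (show i.1+1 ≤ b.1+(i.1+1) by omega),
    liftR_of hrb (show z.1-(i.1+1) = 0 by omega)
      (show b.1+(i.1+1)-(i.1+1) = b.1 by omega)⟩, show i.1+1 < b.1+(i.1+1) by omega⟩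

end Glue3
section Main

variable {n : ℕ}

def glueT (n : ℕ) : Type :=
  (Σ i : Fin n, GoodRel i.1 × GoodRel (n - i.1)) ⊕
  (Σ i : Fin n, GoodRel i.1 × GoodRel (n - 1 - i.1))

instance (n : ℕ) : Finite (glueT n) := by
  unfold glueT; infer_instance

def sumGlue : glueT n → GoodRel (n+1)
  | Sum.inl ⟨i, r₁, r₂⟩ => ⟨bigGlue i r₁.1 r₂.1,
      bigGlue_equivalence i r₁.2.1 r₂.2.1,
      bigGlue_NC i r₂.2.1 r₁.2.2.1 r₂.2.2.1,
      bigGlue_noSing i r₁.2.2.2 r₂.2.2.2⟩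
  | Sum.inr ⟨i, r₁, r₂⟩ => ⟨pairGlue i r₁.1 r₂.1,
      pairGlue_equivalence i r₁.2.1 r₂.2.1,
      pairGlue_NC i r₁.2.2.1 r₂.2.2.1,
      pairGlue_noSing i r₁.2.2.2 r₂.2.2.2⟩

lemma sumGlue_injective : Function.Injective (sumGlue (n := n)) := by
  have hzlt : (0 : ℕ) < n+1 := n.succ_pos
  rintro (⟨i, r₁, r₂⟩ | ⟨i, r₁, r₂⟩) (⟨i', s₁, s₂⟩ | ⟨i', s₁, s₂⟩) h <;>
    simp only [sumGlue] at h <;>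
    have hrel := congrArg Subtype.val h <;>
    simp only at hrel
  · -- big/big
    have hii : i = i' := by
      have h1 : (i'.1+1 = 0) ∨ (i.1+1 ≤ i'.1+1) := by
        refine bigGlue_zero_mem i (r₁ := r₁.1) (r₂ := r₂.1) (z := ⟨0, hzlt⟩)
          (x := ⟨i'.1+1, by have := i'.isLt; omega⟩) rfl ?_
        rw [hrel]
        exact bigGlue_zero_top i' s₁.1 s₂.2.1 rfl rfl
      have h2 : (i.1+1 = 0) ∨ (i'.1+1 ≤ i.1+1) := by
        refine bigGlue_zero_mem i' (r₁ := s₁.1) (r₂ := s₂.1) (z := ⟨0, hzlt⟩)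
          (x := ⟨i.1+1, by have := i.isLt; omega⟩) rfl ?_
        rw [← hrel]
        exact bigGlue_zero_top i r₁.1 r₂.2.1 rfl rfl
      exact Fin.ext (by omega)
    subst hii
    have hr1 : r₁ = s₁ := by
      apply Subtype.ext; funext a b
      have hlt1 : a.1+1 < n+1 := by have := a.isLt; have := i.isLt; omega
      have hlt2 : b.1+1 < n+1 := by have := b.isLt; have := i.isLt; omega
      have e1 := bigGlue_eval_mid i r₁.1 r₂.1 ⟨a.1+1, hlt1⟩ ⟨b.1+1, hlt2⟩ a b rfl rfl
      have e2 := bigGlue_eval_mid i s₁.1 s₂.1 ⟨a.1+1, hlt1⟩ ⟨b.1+1, hlt2⟩ a b rfl rfl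
      exact propext (e1.symm.trans
        ((iff_of_eq (congrFun (congrFun hrel ⟨a.1+1, hlt1⟩) ⟨b.1+1, hlt2⟩)).trans e2))
    have hr2 : r₂ = s₂ := by
      apply Subtype.ext; funext a b
      have hlt1 : a.1+(i.1+1) < n+1 := by have := a.isLt; omega
      have hlt2 : b.1+(i.1+1) < n+1 := by have := b.isLt; omega
      have e1 := bigGlue_eval_out i r₁.1 r₂.1 ⟨a.1+(i.1+1), hlt1⟩ ⟨b.1+(i.1+1), hlt2⟩ a b rfl rfl
      have e2 := bigGlue_eval_out i s₁.1 s₂.1 ⟨a.1+(i.1+1), hlt1⟩ ⟨b.1+(i.1+1), hlt2⟩ a b rfl rfl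
      exact propext (e1.symm.trans
        ((iff_of_eq (congrFun (congrFun hrel ⟨a.1+(i.1+1), hlt1⟩) ⟨b.1+(i.1+1), hlt2⟩)).trans e2))
    rw [hr1, hr2]
  · -- big/pair : impossible
    exfalso
    obtain ⟨x, hx_rel, hx_gt⟩ := bigGlue_zero_big i r₁.1 r₂.2.2.2 (z := ⟨0, hzlt⟩) rfl
    have htop : bigGlue i r₁.1 r₂.1 ⟨0, hzlt⟩ ⟨i.1+1, by have := i.isLt; omega⟩ :=
      bigGlue_zero_top i r₁.1 r₂.2.1 rfl rfl
    rw [hrel] at hx_rel htop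
    have h1 : x.1 = 0 ∨ x.1 = i'.1+1 := pairGlue_zero_mem i' rfl hx_rel
    have h2 : i.1+1 = 0 ∨ i.1+1 = i'.1+1 := pairGlue_zero_mem i' rfl htop
    omega
  · -- pair/big : impossible
    exfalso
    obtain ⟨x, hx_rel, hx_gt⟩ := bigGlue_zero_big i' s₁.1 s₂.2.2.2 (z := ⟨0, hzlt⟩) rfl
    have htop : bigGlue i' s₁.1 s₂.1 ⟨0, hzlt⟩ ⟨i'.1+1, by have := i'.isLt; omega⟩ :=
      bigGlue_zero_top i' s₁.1 s₂.2.1 rfl rfl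
    rw [← hrel] at hx_rel htop
    have h1 : x.1 = 0 ∨ x.1 = i.1+1 := pairGlue_zero_mem i rfl hx_rel
    have h2 : i'.1+1 = 0 ∨ i'.1+1 = i.1+1 := pairGlue_zero_mem i rfl htop
    omega
  · -- pair/pair
    have hii : i = i' := by
      have h1 : (i'.1+1 = 0) ∨ (i'.1+1 = i.1+1) := by
        refine pairGlue_zero_mem i (r₁ := r₁.1) (r₂ := r₂.1) (z := ⟨0, hzlt⟩)
          (x := ⟨i'.1+1, by have := i'.isLt; omega⟩) rfl ?_
        rw [hrel]
        exact pairGlue_zero_top i' s₁.1 s₂.1 rfl rfl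
      exact Fin.ext (by omega)
    subst hii
    have hr1 : r₁ = s₁ := by
      apply Subtype.ext; funext a b
      have hlt1 : a.1+1 < n+1 := by have := a.isLt; have := i.isLt; omega
      have hlt2 : b.1+1 < n+1 := by have := b.isLt; have := i.isLt; omega
      have e1 := pairGlue_eval_mid i r₁.1 r₂.1 ⟨a.1+1, hlt1⟩ ⟨b.1+1, hlt2⟩ a b rfl rfl
      have e2 := pairGlue_eval_mid i s₁.1 s₂.1 ⟨a.1+1, hlt1⟩ ⟨b.1+1, hlt2⟩ a b rfl rfl
      exact propext (e1.symm.trans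
        ((iff_of_eq (congrFun (congrFun hrel ⟨a.1+1, hlt1⟩) ⟨b.1+1, hlt2⟩)).trans e2))
    have hr2 : r₂ = s₂ := by
      apply Subtype.ext; funext a b
      have hlt1 : a.1+i.1+2 < n+1 := by have := a.isLt; omega
      have hlt2 : b.1+i.1+2 < n+1 := by have := b.isLt; omega
      have e1 := pairGlue_eval_out i r₁.1 r₂.1 ⟨a.1+i.1+2, hlt1⟩ ⟨b.1+i.1+2, hlt2⟩ a b rfl rfl
      have e2 := pairGlue_eval_out i s₁.1 s₂.1 ⟨a.1+i.1+2, hlt1⟩ ⟨b.1+i.1+2, hlt2⟩ a b rfl rfl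
      exact propext (e1.symm.trans
        ((iff_of_eq (congrFun (congrFun hrel ⟨a.1+i.1+2, hlt1⟩) ⟨b.1+i.1+2, hlt2⟩)).trans e2))
    rw [hr1, hr2]

end Main
section Surj

variable {n : ℕ}

lemma equivalence_restrict {m k : ℕ} {r : Fin m → Fin m → Prop} (h : Equivalence r)
    (e : Fin k → Fin m) : Equivalence (fun a b => r (e a) (e b)) :=
  ⟨fun _ => h.refl _, fun hab => h.symm hab, fun hab hbc => h.trans hab hbc⟩

lemma NCRel_restrict {m k : ℕ} {r : Fin m → Fin m → Prop} (hNC : NCRel r)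
    (e : Fin k → Fin m) (he : ∀ a b, a < b → e a < e b) :
    NCRel (fun a b => r (e a) (e b)) := by
  rintro ⟨a, b, c, d, h1, h2, h3, h4, h5, h6⟩
  exact hNC ⟨e a, e b, e c, e d, he _ _ h1, he _ _ h2, he _ _ h3, h4, h5, h6⟩

lemma sumGlue_surjective : Function.Surjective (sumGlue (n := n)) := by
  intro r
  classical
  obtain ⟨heq, hnc, hns⟩ := r.2
  obtain ⟨z, hzv⟩ : ∃ z : Fin (n+1), z.1 = 0 := ⟨⟨0, n.succ_pos⟩, rfl⟩
  obtain ⟨b0, hb0ne, hb0⟩ := hns z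
  have hb0v : b0.1 ≠ 0 := fun hh => hb0ne (Fin.ext (by omega))
  have hex : ∃ x : ℕ, ∃ hx : x < n+1, x ≠ 0 ∧ r.1 z ⟨x, hx⟩ :=
    ⟨b0.1, b0.isLt, hb0v, hb0⟩
  obtain ⟨j, hjlt, hjne, hj0ex, hmin⟩ :
      ∃ j, j < n+1 ∧ j ≠ 0 ∧ (∃ hj : j < n+1, r.1 z ⟨j, hj⟩) ∧
        (∀ x : Fin (n+1), 0 < x.1 → x.1 < j → ¬ r.1 z x) := by
    obtain ⟨h1, h2, h3⟩ := Nat.find_spec hex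
    exact ⟨Nat.find hex, h1, h2, ⟨h1, h3⟩, fun x hx0 hxlt hr =>
      Nat.find_min hex hxlt ⟨x.isLt, by omega, hr⟩⟩
  obtain ⟨jfin, hjfv⟩ : ∃ x : Fin (n+1), x.1 = j := ⟨⟨j, hjlt⟩, rfl⟩
  have hj0 : r.1 z jfin := by
    obtain ⟨hj, h⟩ := hj0ex
    exact rel_cast h rfl (show j = jfin.1 by omega)
  have F2 : ∀ u x : Fin (n+1), 0 < u.1 → u.1 < j → j < x.1 → ¬ r.1 u x := by
    intro u x h1 h2 h3 hux
    exact hnc ⟨z, u, jfin, x, by rw [Fin.lt_def]; omega, by rw [Fin.lt_def]; omega,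
      by rw [Fin.lt_def]; omega, hj0, hux, hmin u h1 h2⟩
  have F3 : ∀ x : Fin (n+1), r.1 x jfin → r.1 z x := fun x h => heq.trans hj0 (heq.symm h)
  have hjn : j - 1 < n := by omega
  obtain ⟨i, hiv⟩ : ∃ i : Fin n, i.1 = j - 1 := ⟨⟨j-1, hjn⟩, rfl⟩
  have hj1 : i.1 + 1 = j := by omega
  -- the middle component
  set e₁ : Fin i.1 → Fin (n+1) := fun a => ⟨a.1+1, by
    have : a.1 < i.1 := a.isLt
    omega⟩ with he₁def
  have he₁v : ∀ a, (e₁ a).1 = a.1 + 1 := fun a => rfl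
  set m₁ : Fin i.1 → Fin i.1 → Prop := fun a b => r.1 (e₁ a) (e₁ b) with hm₁def
  have hm₁e : Equivalence m₁ := equivalence_restrict heq e₁
  have hm₁nc : NCRel m₁ := NCRel_restrict hnc e₁ (by
    intro a b hab
    rw [Fin.lt_def] at hab ⊢
    simp only [he₁v]
    omega)
  have hm₁ns : NoSingRel m₁ := by
    intro a
    have halt : a.1 < i.1 := a.isLt
    obtain ⟨v, hvne, hv⟩ := hns (e₁ a)
    have hvv : v.1 ≠ a.1+1 := fun hh => hvne (Fin.ext hh)
    have hv0 : 0 < v.1 := by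
      rcases Nat.eq_zero_or_pos v.1 with h0 | h
      · exfalso
        refine hmin (e₁ a) (show 0 < a.1+1 by omega) (show a.1+1 < j by omega) ?_
        exact rel_cast (heq.symm hv) (by omega) rfl
      · exact h
    have hvj : v.1 < j := by
      by_contra hge
      push_neg at hge
      rcases Nat.eq_or_lt_of_le hge with hc | hc
      · refine hmin (e₁ a) (show 0 < a.1+1 by omega) (show a.1+1 < j by omega) ?_
        exact F3 (e₁ a) (rel_cast hv rfl (by omega))
      · exact F2 (e₁ a) v (show 0 < a.1+1 by omega) (show a.1+1 < j by omega) hc hv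
    refine ⟨⟨v.1-1, show v.1-1 < i.1 by omega⟩, Fin.ne_of_val_ne (show v.1-1 ≠ a.1 by omega), ?_⟩
    show r.1 (e₁ a) (e₁ ⟨v.1-1, _⟩)
    exact rel_cast hv rfl (show v.1 = v.1-1+1 by omega)
  -- helper for the pair-block
  have hza : ∀ x : Fin (n+1), (x.1 = 0 ∨ x.1 = j) → r.1 z x := by
    intro x hx
    rcases hx with h0 | hj'
    · exact rel_cast (heq.refl z) rfl (by omega)
    · exact rel_cast hj0 rfl (show jfin.1 = x.1 by omega)
  by_cases hflag : ∀ x : Fin (n+1), r.1 z x → x.1 = 0 ∨ x.1 = j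
  · -- PAIR case
    set e₂ : Fin (n-1-i.1) → Fin (n+1) := fun a => ⟨a.1+i.1+2, by
      have : a.1 < n-1-i.1 := a.isLt
      omega⟩ with he₂def
    have he₂v : ∀ a, (e₂ a).1 = a.1+i.1+2 := fun a => rfl
    set m₂ : Fin (n-1-i.1) → Fin (n-1-i.1) → Prop := fun a b => r.1 (e₂ a) (e₂ b) with hm₂def
    have hm₂e : Equivalence m₂ := equivalence_restrict heq e₂
    have hm₂nc : NCRel m₂ := NCRel_restrict hnc e₂ (by
      intro a b hab
      rw [Fin.lt_def] at hab ⊢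
      simp only [he₂v]
      omega)
    have hm₂ns : NoSingRel m₂ := by
      intro a
      have halt : a.1 < n-1-i.1 := a.isLt
      obtain ⟨v, hvne, hv⟩ := hns (e₂ a)
      have hvv : v.1 ≠ a.1+i.1+2 := fun hh => hvne (Fin.ext hh)
      have hv0 : v.1 ≠ 0 := by
        intro h0
        have hzu : r.1 z (e₂ a) := rel_cast (heq.symm hv) (by omega) rfl
        have h2 : (e₂ a).1 = 0 ∨ (e₂ a).1 = j := hflag _ hzu
        rw [he₂v] at h2
        omega
      have hvj : v.1 ≠ j := by
        intro hj'
        have hzu : r.1 z (e₂ a) := F3 (e₂ a) (rel_cast hv rfl (by omega))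
        have h2 : (e₂ a).1 = 0 ∨ (e₂ a).1 = j := hflag _ hzu
        rw [he₂v] at h2
        omega
      have hvgt : j < v.1 := by
        by_contra hge
        push_neg at hge
        exact F2 v (e₂ a) (by omega) (by omega) (show j < a.1+i.1+2 by omega) (heq.symm hv)
      refine ⟨⟨v.1-i.1-2, show v.1-i.1-2 < n-1-i.1 by have := v.isLt; omega⟩,
        Fin.ne_of_val_ne (show v.1-i.1-2 ≠ a.1 by omega), ?_⟩
      show r.1 (e₂ a) (e₂ ⟨v.1-i.1-2, _⟩)
      exact rel_cast hv rfl (show v.1 = v.1-i.1-2+i.1+2 by omega)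
    refine ⟨Sum.inr ⟨i, ⟨m₁, hm₁e, hm₁nc, hm₁ns⟩, ⟨m₂, hm₂e, hm₂nc, hm₂ns⟩⟩, ?_⟩
    apply Subtype.ext
    show pairGlue i m₁ m₂ = r.1
    funext a b
    apply propext
    have ha := a.isLt
    have hb := b.isLt
    constructor
    · rintro (⟨hpa, hpb⟩ | ⟨h1, h2, h3, h4, ⟨p, q, hr⟩⟩ | ⟨h1, h2, ⟨p, q, hr⟩⟩)
      · exact heq.trans (heq.symm (hza a (by omega))) (hza b (by omega))
      · exact rel_cast hr (show a.1-1+1 = a.1 by omega) (show b.1-1+1 = b.1 by omega)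
      · exact rel_cast hr (show a.1-i.1-2+i.1+2 = a.1 by omega)
          (show b.1-i.1-2+i.1+2 = b.1 by omega)
    · intro hr
      have key : ∀ x : Fin (n+1), (x.1 = 0 ∨ x.1 = j) ∨ (0 < x.1 ∧ x.1 < j) ∨ (j < x.1) := by
        intro x; omega
      rcases key a with haP | haM | haO <;> rcases key b with hbP | hbM | hbO
      · exact Or.inl ⟨by omega, by omega⟩
      · exfalso
        exact hmin b (by omega) (by omega) (heq.trans (hza a haP) hr)
      · exfalso
        have := hflag b (heq.trans (hza a haP) hr)
        omega
      · exfalso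
        exact hmin a (by omega) (by omega) (heq.trans (hza b hbP) (heq.symm hr))
      · refine Or.inr (Or.inl ⟨by omega, by omega, by omega, by omega,
          show a.1-1 < i.1 by omega, show b.1-1 < i.1 by omega, ?_⟩)
        show r.1 (e₁ _) (e₁ _)
        exact rel_cast hr (show a.1 = a.1-1+1 by omega) (show b.1 = b.1-1+1 by omega)
      · exact absurd hr (F2 a b (by omega) (by omega) (by omega))
      · exfalso
        have := hflag a (heq.trans (hza b hbP) (heq.symm hr))
        omega
      · exact absurd (heq.symm hr) (F2 b a (by omega) (by omega) (by omega))
      · refine Or.inr (Or.inr ⟨by omega, by omega,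
          show a.1-i.1-2 < n-1-i.1 by omega, show b.1-i.1-2 < n-1-i.1 by omega, ?_⟩)
        show r.1 (e₂ _) (e₂ _)
        exact rel_cast hr (show a.1 = a.1-i.1-2+i.1+2 by omega)
          (show b.1 = b.1-i.1-2+i.1+2 by omega)
  · -- BIG case
    push_neg at hflag
    obtain ⟨w, hw_rel, hw0, hwj⟩ := hflag
    have hwlt := w.isLt
    have hwgt : j < w.1 := by
      rcases Nat.lt_trichotomy w.1 j with hc | hc | hc
      · exact absurd hw_rel (hmin w (by omega) hc)
      · exact absurd hc hwj
      · exact hc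
    set e₂ : Fin (n-i.1) → Fin (n+1) := fun a => ⟨a.1+(i.1+1), by
      have : a.1 < n-i.1 := a.isLt
      omega⟩ with he₂def
    have he₂v : ∀ a, (e₂ a).1 = a.1+(i.1+1) := fun a => rfl
    set m₂ : Fin (n-i.1) → Fin (n-i.1) → Prop := fun a b => r.1 (e₂ a) (e₂ b) with hm₂def
    have hm₂e : Equivalence m₂ := equivalence_restrict heq e₂
    have hm₂nc : NCRel m₂ := NCRel_restrict hnc e₂ (by
      intro a b hab
      rw [Fin.lt_def] at hab ⊢
      simp only [he₂v]
      omega)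
    have hm₂ns : NoSingRel m₂ := by
      intro a
      have halt : a.1 < n-i.1 := a.isLt
      by_cases hu0 : r.1 z (e₂ a)
      · by_cases huj : a.1 = 0
        · refine ⟨⟨w.1-(i.1+1), show w.1-(i.1+1) < n-i.1 by omega⟩,
            Fin.ne_of_val_ne (show w.1-(i.1+1) ≠ a.1 by omega), ?_⟩
          show r.1 (e₂ a) (e₂ ⟨w.1-(i.1+1), _⟩)
          exact rel_cast (heq.trans (heq.symm hj0) hw_rel)
            (show jfin.1 = a.1+(i.1+1) by omega)
            (show w.1 = w.1-(i.1+1)+(i.1+1) by omega)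
        · refine ⟨⟨0, show 0 < n-i.1 by omega⟩,
            Fin.ne_of_val_ne (show (0:ℕ) ≠ a.1 by omega), ?_⟩
          show r.1 (e₂ a) (e₂ ⟨0, _⟩)
          exact rel_cast (heq.trans (heq.symm hu0) hj0) rfl
            (show jfin.1 = 0+(i.1+1) by omega)
      · have haz : 0 < a.1 := by
          by_contra hle
          push_neg at hle
          exact hu0 (rel_cast hj0 rfl (show jfin.1 = a.1+(i.1+1) by omega))
        obtain ⟨v, hvne, hv⟩ := hns (e₂ a)
        have hvv : v.1 ≠ a.1+(i.1+1) := fun hh => hvne (Fin.ext hh)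
        have hv0 : v.1 ≠ 0 :=
          fun h0 => hu0 (rel_cast (heq.symm hv) (show v.1 = z.1 by omega) rfl)
        have hvnm : ¬ (0 < v.1 ∧ v.1 < j) := by
          rintro ⟨hm1, hm2⟩
          exact F2 v (e₂ a) hm1 hm2 (show j < a.1+(i.1+1) by omega) (heq.symm hv)
        have hvnj : v.1 ≠ j := fun hj' =>
          hu0 (F3 (e₂ a) (rel_cast hv rfl (show v.1 = jfin.1 by omega)))
        have hvgt : j < v.1 := by omega
        refine ⟨⟨v.1-(i.1+1), show v.1-(i.1+1) < n-i.1 by have := v.isLt; omega⟩,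
          Fin.ne_of_val_ne (show v.1-(i.1+1) ≠ a.1 by omega), ?_⟩
        show r.1 (e₂ a) (e₂ ⟨v.1-(i.1+1), _⟩)
        exact rel_cast hv rfl (show v.1 = v.1-(i.1+1)+(i.1+1) by omega)
    refine ⟨Sum.inl ⟨i, ⟨m₁, hm₁e, hm₁nc, hm₁ns⟩, ⟨m₂, hm₂e, hm₂nc, hm₂ns⟩⟩, ?_⟩
    apply Subtype.ext
    show bigGlue i m₁ m₂ = r.1
    funext a b
    apply propext
    have ha := a.isLt
    have hb := b.isLt
    have hcon : ∀ (x : Fin (n+1)) (hx : x.1 = 0 ∨ i.1+1 ≤ x.1)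
        (p : x.1-(i.1+1) < n-i.1), r.1 x (e₂ ⟨x.1-(i.1+1), p⟩) := by
      intro x hx p
      rcases hx with h0 | hge
      · exact rel_cast hj0 (by omega) (show jfin.1 = x.1-(i.1+1)+(i.1+1) by omega)
      · exact rel_cast (heq.refl x) rfl (show x.1 = x.1-(i.1+1)+(i.1+1) by omega)
    constructor
    · rintro (⟨h1, h2, h3, h4, ⟨p, q, hr⟩⟩ | ⟨hpa, hpb, ⟨p, q, hr⟩⟩)
      · exact rel_cast hr (show a.1-1+1 = a.1 by omega) (show b.1-1+1 = b.1 by omega)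
      · exact heq.trans (hcon a (by omega) p) (heq.trans hr (heq.symm (hcon b (by omega) q)))
    · intro hr
      have key : ∀ x : Fin (n+1), (x.1 = 0 ∨ i.1+1 ≤ x.1) ∨ (0 < x.1 ∧ x.1 < j) := by
        intro x; omega
      rcases key a with haO | haM <;> rcases key b with hbO | hbM
      · refine Or.inr ⟨haO, hbO, show a.1-(i.1+1) < n-i.1 by omega,
          show b.1-(i.1+1) < n-i.1 by omega, ?_⟩
        show r.1 (e₂ _) (e₂ _)
        exact heq.trans (heq.symm (hcon a haO _)) (heq.trans hr (hcon b hbO _))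
      · exfalso
        rcases haO with h0 | hge
        · exact hmin b (by omega) (by omega) (rel_cast hr (by omega) rfl)
        · rcases Nat.eq_or_lt_of_le hge with hc | hc
          · exact hmin b (by omega) (by omega)
              (F3 b (rel_cast (heq.symm hr) rfl (by omega)))
          · exact F2 b a (by omega) (by omega) (by omega) (heq.symm hr)
      · exfalso
        rcases hbO with h0 | hge
        · exact hmin a (by omega) (by omega) (rel_cast (heq.symm hr) (by omega) rfl)
        · rcases Nat.eq_or_lt_of_le hge with hc | hc
          · exact hmin a (by omega) (by omega) (F3 a (rel_cast hr rfl (by omega)))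
          · exact F2 a b (by omega) (by omega) (by omega) hr
      · refine Or.inl ⟨by omega, by omega, by omega, by omega,
          show a.1-1 < i.1 by omega, show b.1-1 < i.1 by omega, ?_⟩
        show r.1 (e₁ _) (e₁ _)
        exact rel_cast hr (show a.1 = a.1-1+1 by omega) (show b.1 = b.1-1+1 by omega)

end Surj
section Count

open Finset

lemma card_goodRel_zero : Nat.card (GoodRel 0) = 1 := by
  have h1 : Nonempty (GoodRel 0) :=
    ⟨⟨fun _ _ => True,
      ⟨fun a => a.elim0, fun {a b} _ => trivial, fun {a b c} _ _ => trivial⟩,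
      by rintro ⟨a, -⟩; exact a.elim0,
      fun a => a.elim0⟩⟩
  have h2 : Subsingleton (GoodRel 0) :=
    ⟨fun r s => Subtype.ext (funext fun a => a.elim0)⟩
  exact Nat.card_eq_one_iff_unique.mpr ⟨h2, h1⟩

lemma card_glueT (n : ℕ) : Nat.card (glueT n) =
    (∑ i ∈ Finset.range n, Nat.card (GoodRel i) * Nat.card (GoodRel (n-i))) +
    (∑ i ∈ Finset.range n, Nat.card (GoodRel i) * Nat.card (GoodRel (n-1-i))) := by
  letI : ∀ k, Fintype (GoodRel k) := fun k => Fintype.ofFinite _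
  show Nat.card ((Σ i : Fin n, GoodRel i.1 × GoodRel (n - i.1)) ⊕
    (Σ i : Fin n, GoodRel i.1 × GoodRel (n - 1 - i.1))) = _
  rw [Nat.card_sum]
  congr 1
  · calc Nat.card (Σ i : Fin n, GoodRel i.1 × GoodRel (n - i.1))
        = ∑ i : Fin n, Nat.card (GoodRel i.1) * Nat.card (GoodRel (n - i.1)) := by
          rw [Nat.card_eq_fintype_card, Fintype.card_sigma]
          refine Finset.sum_congr rfl fun i _ => ?_
          rw [Fintype.card_prod, Nat.card_eq_fintype_card, Nat.card_eq_fintype_card]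
      _ = ∑ i ∈ Finset.range n, Nat.card (GoodRel i) * Nat.card (GoodRel (n-i)) :=
          Fin.sum_univ_eq_sum_range (fun i => Nat.card (GoodRel i) * Nat.card (GoodRel (n-i))) n
  · calc Nat.card (Σ i : Fin n, GoodRel i.1 × GoodRel (n - 1 - i.1))
        = ∑ i : Fin n, Nat.card (GoodRel i.1) * Nat.card (GoodRel (n - 1 - i.1)) := by
          rw [Nat.card_eq_fintype_card, Fintype.card_sigma]
          refine Finset.sum_congr rfl fun i _ => ?_
          rw [Fintype.card_prod, Nat.card_eq_fintype_card, Nat.card_eq_fintype_card]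
      _ = ∑ i ∈ Finset.range n, Nat.card (GoodRel i) * Nat.card (GoodRel (n-1-i)) :=
          Fin.sum_univ_eq_sum_range (fun i => Nat.card (GoodRel i) * Nat.card (GoodRel (n-1-i))) n

lemma card_goodRel_succ (n : ℕ) : Nat.card (GoodRel (n+1)) =
    (∑ i ∈ Finset.range n, Nat.card (GoodRel i) * Nat.card (GoodRel (n-i))) +
    (∑ i ∈ Finset.range n, Nat.card (GoodRel i) * Nat.card (GoodRel (n-1-i))) := by
  rw [← card_glueT n]
  exact (Nat.card_eq_of_bijective sumGlue ⟨sumGlue_injective, sumGlue_surjective⟩).symm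

lemma card_goodRel_eq_riordan : ∀ m, Nat.card (GoodRel m) = riordan m := by
  intro m
  induction m using Nat.strong_induction_on with
  | _ m ih =>
    match m with
    | 0 => rw [card_goodRel_zero, riordan_zero]
    | (k+1) =>
      rw [card_goodRel_succ k, riordan_succ k]
      congr 1
      · refine Finset.sum_congr rfl fun i hi => ?_
        have hik : i < k := Finset.mem_range.mp hi
        rw [ih i (by omega), ih (k-i) (by omega)]
      · refine Finset.sum_congr rfl fun i hi => ?_
        have hik : i < k := Finset.mem_range.mp hi
        rw [ih i (by omega), ih (k-1-i) (by omega)]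

end Count

theorem riordan_counts_noncrossing_partitions_without_singletons
    (R : ℕ → ℕ) (hR0 : R 0 = 1) (hR1 : R 1 = 0)
    (hrec : ∀ k : ℕ, 2 ≤ k → (k + 1) * R k = (k - 1) * (2 * R (k - 1) + 3 * R (k - 2)))
    (m : ℕ) :
    Nat.card {P : Finpartition (Finset.univ : Finset (Fin m)) //
      IsNoncrossing P ∧ NoSingletons P} = R m := by
  rw [card_bridge m, card_goodRel_eq_riordan m, riordan_unique R hR0 hR1 hrec m]
end

section
/- For every natural number n ≥ 1, the n-th Riordan number R_n equals the difference between the central coefficient and its predecessor in the trinomial expansion: R_n = [x^n] (1 + x + x^2)^n − [x^{n−1}] (1 + x + x^2)^n, where [x^k] P denotes the coefficient of x^k in the polynomial P (with the polynomial (1 + X + X^2)^n taken over the integers). -/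
open Polynomial

/-- Trinomial coefficients. -/
noncomputable def Tq (n k : ℕ) : ℤ := ((1 + X + X ^ 2 : Polynomial ℤ) ^ n).coeff k

lemma Tq_succ (n j : ℕ) : Tq (n + 1) (j + 2) = Tq n (j + 2) + Tq n (j + 1) + Tq n j := by
  unfold Tq
  rw [pow_succ, mul_add, mul_add, mul_one, coeff_add, coeff_add]
  rw [coeff_mul_X, coeff_mul_X_pow]

lemma Tq_succ_one (n : ℕ) : Tq (n + 1) 1 = Tq n 1 + Tq n 0 := by
  unfold Tq
  rw [pow_succ, mul_add, mul_add, mul_one, coeff_add, coeff_add]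
  rw [show (1:ℕ) = 0 + 1 from rfl, coeff_mul_X, coeff_mul_X_pow']
  simp

lemma deriv_identity (n : ℕ) :
    derivative ((1 + X + X ^ 2 : Polynomial ℤ) ^ n)
      + derivative ((1 + X + X ^ 2 : Polynomial ℤ) ^ n) * X
      + derivative ((1 + X + X ^ 2 : Polynomial ℤ) ^ n) * X ^ 2
    = C (n : ℤ) * (1 + X + X ^ 2) ^ n
      + (C (n : ℤ) * ((1 + X + X ^ 2) ^ n * X) + C (n : ℤ) * ((1 + X + X ^ 2) ^ n * X)) := by
  have hq : derivative (1 + X + X ^ 2 : Polynomial ℤ) = 1 + 2 * X := by simp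
  rw [derivative_pow, hq]
  cases n with
  | zero => simp
  | succ k =>
    have h1 : k + 1 - 1 = k := rfl
    rw [h1, pow_succ]
    push_cast
    ring

lemma Tq_B (n j : ℕ) :
    ((j : ℤ) + 2) * Tq n (j + 2) + ((j : ℤ) + 1) * Tq n (j + 1) + (j : ℤ) * Tq n j
      = (n : ℤ) * Tq n (j + 1) + 2 * (n : ℤ) * Tq n j := by
  have h := deriv_identity n
  have hc : ∀ i : ℕ,
      (derivative ((1 + X + X ^ 2 : Polynomial ℤ) ^ n)
      + derivative ((1 + X + X ^ 2 : Polynomial ℤ) ^ n) * X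
      + derivative ((1 + X + X ^ 2 : Polynomial ℤ) ^ n) * X ^ 2).coeff i
    = (C (n : ℤ) * (1 + X + X ^ 2) ^ n
      + (C (n : ℤ) * ((1 + X + X ^ 2) ^ n * X) + C (n : ℤ) * ((1 + X + X ^ 2) ^ n * X))).coeff i := by
    intro i; rw [h]
  have hcj := hc (j + 1)
  unfold Tq
  cases j with
  | zero =>
    simp only [coeff_add, coeff_mul_X, coeff_C_mul, coeff_derivative,
      coeff_mul_X_pow'] at hcj
    norm_num at hcj ⊢
    push_cast at hcj ⊢
    linarith
  | succ i =>
    rw [show i + 1 + 1 = i + 2 from rfl] at hcj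
    rw [show (i:ℕ) + 2 = i + 2 from rfl] at hcj
    simp only [coeff_add, coeff_C_mul] at hcj
    rw [coeff_mul_X_pow (derivative ((1 + X + X ^ 2 : Polynomial ℤ) ^ n)) 2 i] at hcj
    rw [show (i : ℕ) + 2 = (i + 1) + 1 from rfl] at hcj
    rw [coeff_mul_X, coeff_mul_X] at hcj
    simp only [coeff_derivative] at hcj
    push_cast at hcj ⊢
    linarith

/-- Edge symmetry: T(t+1, t+2) = T(t+1, t). -/
lemma Tq_symm (t : ℕ) : Tq (t + 1) (t + 2) = Tq (t + 1) t := by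
  have h := Tq_B (t + 1) t
  have h2 : ((t : ℤ) + 2) * Tq (t + 1) (t + 2) = ((t : ℤ) + 2) * Tq (t + 1) t := by
    push_cast at h
    linarith
  have hne : ((t : ℤ) + 2) ≠ 0 := by positivity
  exact mul_left_cancel₀ hne h2

/-- E1: c p = c (p-1) + 2 d (p-1) for p = t+2. -/
lemma Tq_E1 (t : ℕ) : Tq (t + 2) (t + 2) = Tq (t + 1) (t + 1) + 2 * Tq (t + 1) t := by
  have hA := Tq_succ (t + 1) t
  have hs := Tq_symm t
  linarith

lemma Tq_one_val : Tq 1 0 = 1 ∧ Tq 1 1 = 1 ∧ Tq 1 2 = 1 := by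
  unfold Tq
  norm_num [coeff_one, coeff_X]

/-- E2: (p+1) d p = 2p c (p-1) + p d (p-1) for p = t+2. -/
lemma Tq_E2 (t : ℕ) : ((t : ℤ) + 3) * Tq (t + 2) (t + 1)
    = (2 * (t : ℤ) + 4) * Tq (t + 1) (t + 1) + ((t : ℤ) + 2) * Tq (t + 1) t := by
  cases t with
  | zero =>
    have h1 := Tq_succ_one 1
    obtain ⟨h0, hh1, _⟩ := Tq_one_val
    rw [show (0:ℕ) + 2 = 2 from rfl, show (0:ℕ) + 1 = 1 from rfl]
    rw [h1, h0, hh1]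
    norm_num
  | succ s =>
    have hA := Tq_succ (s + 2) s
    have hB := Tq_B (s + 2) s
    rw [show s + 1 + 2 = s + 2 + 1 from rfl, show s + 1 + 1 = s + 2 from rfl]
    rw [show s + 2 + 1 = s + 3 from rfl] at hA ⊢
    push_cast at hB ⊢
    linear_combination ((s : ℤ) + 4) * hA - hB

theorem riordan_trinomial_coeff
    (R : ℕ → ℕ) (hR0 : R 0 = 1) (hR1 : R 1 = 0)
    (hrec : ∀ k : ℕ, 2 ≤ k → (k + 1) * R k = (k - 1) * (2 * R (k - 1) + 3 * R (k - 2)))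
    (n : ℕ) (hn : 1 ≤ n) :
    (R n : ℤ) = ((1 + X + X ^ 2 : Polynomial ℤ) ^ n).coeff n
      - ((1 + X + X ^ 2 : Polynomial ℤ) ^ n).coeff (n - 1) := by
  -- base values
  obtain ⟨hT10, hT11, hT12⟩ := Tq_one_val
  have hR2 : R 2 = 1 := by
    have h := hrec 2 (by norm_num)
    rw [hR0, hR1] at h
    omega
  have hT22 : Tq 2 2 = 3 := by
    have := Tq_succ 1 0
    rw [hT10, hT11, hT12] at this
    linarith
  have hT21 : Tq 2 1 = 2 := by
    have := Tq_succ_one 1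
    rw [hT10, hT11] at this
    linarith
  -- key induction
  have key : ∀ m : ℕ, ((R (m + 1) : ℤ) = Tq (m + 1) (m + 1) - Tq (m + 1) m)
      ∧ ((R (m + 2) : ℤ) = Tq (m + 2) (m + 2) - Tq (m + 2) (m + 1)) := by
    intro m
    induction m with
    | zero =>
      constructor
      · rw [hR1, hT11, hT10]; norm_num
      · rw [hR2, hT22, hT21]; norm_num
    | succ p ih =>
      obtain ⟨ih1, ih2⟩ := ih
      refine ⟨ih2, ?_⟩
      -- prove S (p+3)
      have hr := hrec (p + 3) (by omega)
      rw [show p + 3 - 1 = p + 2 from rfl, show p + 3 - 2 = p + 1 from rfl] at hr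
      have hrz : ((p : ℤ) + 4) * (R (p + 3) : ℤ)
          = ((p : ℤ) + 2) * (2 * (R (p + 2) : ℤ) + 3 * (R (p + 1) : ℤ)) := by
        exact_mod_cast hr
      have h4 := Tq_E1 (p + 1)   -- c3 = c2 + 2 d2
      have h5 := Tq_E2 (p + 1)   -- (n+1) d3 = 2n c2 + n d2
      have h6 := Tq_E1 p         -- c2 = a + 2 b
      have h7 := Tq_E2 p         -- n d2 = (2n-2) a + (n-1) b
      rw [show p + 1 + 2 = p + 3 from rfl, show p + 1 + 1 = p + 2 from rfl] at h4 h5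
      push_cast at h5 h7
      have hne : (((p : ℤ) + 3) * ((p : ℤ) + 4)) ≠ 0 := by positivity
      apply mul_left_cancel₀ hne
      set n : ℤ := (p : ℤ) + 3 with hn_def
      have hmain : n * (n + 1) * (R (p + 3) : ℤ)
          = n * (n + 1) * (Tq (p + 3) (p + 3) - Tq (p + 3) (p + 2)) := by
        have e1 : (n + 1) * (R (p + 3) : ℤ)
            = (n - 1) * (2 * (R (p + 2) : ℤ) + 3 * (R (p + 1) : ℤ)) := by
          rw [hn_def]; push_cast at hrz ⊢; linarith
        linear_combination n * e1 + 2 * n * (n - 1) * ih2 + 3 * n * (n - 1) * ih1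
          - n * (n + 1) * h4 + n * h5 + 3 * n * (n - 1) * h6 - 3 * n * h7
      calc n * (n + 1) * (R (p + 3) : ℤ)
          = n * (n + 1) * (Tq (p + 3) (p + 3) - Tq (p + 3) (p + 2)) := hmain
        _ = _ := by ring
  obtain ⟨m, rfl⟩ : ∃ m, n = m + 1 := ⟨n - 1, by omega⟩
  have h := (key m).1
  rw [show m + 1 - 1 = m from rfl]
  exact h
end
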